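/- arXiv:2407.20583 — 9 statements merged into one kernel-verified Lean document; each statement's English description precedes it below -/
import Mathlib

section
/- Let q ≡ 3 (mod 4) be an odd prime power, χ a generator of the character group of F_q^×, and 1 ≤ r ≤ q-2 an integer. Let s_1, ..., s_{(q-1)/2} be all nonzero squares of F_q. Then det[χ^r(s_i + s_j) + χ^r(s_i - s_j)]_{1≤i,j≤(q-1)/2} = ∏_{k=0}^{(q-3)/2} J_q(χ^r, χ^{2k}), where J_q(A,B) = Σ_{x∈F_q} A(x)B(1-x) is the Jacobi sum. -/
open Finset Matrix

/-- For `q ≡ 3 (mod 4)` an odd prime power, `χ` a generator of the character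
group of `F_q^×`, and `1 ≤ r ≤ q-2`,
`det[χ^r(s_i+s_j) + χ^r(s_i-s_j)] = ∏_{k=0}^{(q-3)/2} J_q(χ^r, χ^{2k})`,
where the `s_i` are the nonzero squares of `F_q`. -/
theorem det_B_q_2_eq_prod_jacobiSum (p n q : ℕ) [Fact p.Prime] (hn : 0 < n) (hq : q = p ^ n)
    (hq3 : q % 4 = 3)
    (F : Type*) [Field F] [Fintype F] (hcard : Fintype.card F = q)
    (χ : MulChar F ℂ) (hχ : ∀ ψ : MulChar F ℂ, ψ ∈ Subgroup.zpowers χ)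
    (r : ℕ) (hr1 : 1 ≤ r) (hr2 : r ≤ q - 2)
    (s : Fin ((q - 1) / 2) → F) (hs : Function.Injective s)
    (hsimg : ∀ x : F, (∃ i, s i = x) ↔ ∃ y : F, y ≠ 0 ∧ y ^ 2 = x) :
    (Matrix.of fun i j => (χ ^ r) (s i + s j) + (χ ^ r) (s i - s j)).det
      = ∏ k ∈ Finset.range ((q - 1) / 2), jacobiSum (χ ^ r) (χ ^ (2 * k)) := by
  classical
  revert hs hsimg
  revert s
  set m := (q - 1) / 2 with hm
  intro s hs hsimg
  have hq1 : 1 < q := by omega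
  have hmodd : m % 2 = 1 := by omega
  have h2m : 2 * m = q - 1 := by omega
  have hm0 : 0 < m := by omega
  haveI : NeZero m := ⟨hm0.ne'⟩
  obtain ⟨u, hu⟩ := IsCyclic.exists_generator (α := Fˣ)
  have hcardu : Fintype.card Fˣ = 2 * m := by
    rw [Fintype.card_units, hcard, h2m]
  have horderu : orderOf u = 2 * m := by
    rw [orderOf_eq_card_of_forall_mem_zpowers hu, Nat.card_eq_fintype_card, hcardu]
  haveI : NeZero (Monoid.exponent Fˣ) := ⟨Monoid.exponent_ne_zero_of_finite⟩
  have horderχ : orderOf χ = 2 * m := by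
    rw [orderOf_eq_card_of_forall_mem_zpowers hχ,
      MulChar.card_eq_card_units_of_hasEnoughRootsOfUnity F ℂ,
      Nat.card_eq_fintype_card, hcardu]
  -- the root of unity attached to χ
  set ζ : ℂˣ := MulChar.equivToUnitHom χ u with hζ
  have hζcoe : ∀ j : ℕ, χ ((u : F) ^ j) = ((ζ ^ j : ℂˣ) : ℂ) := by
    intro j
    rw [_root_.map_pow, ← MulChar.coe_equivToUnitHom χ u, Units.val_pow_eq_pow_val]
  have horderζ : orderOf ζ = 2 * m := by
    refine Nat.dvd_antisymm ?_ ?_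
    · rw [← horderχ]
      apply orderOf_dvd_of_pow_eq_one
      apply Units.ext
      rw [Units.val_pow_eq_pow_val, Units.val_one, hζ, MulChar.coe_equivToUnitHom,
        ← MulChar.pow_apply_coe, pow_orderOf_eq_one, MulChar.one_apply_coe]
    · rw [← horderχ]
      apply orderOf_dvd_of_pow_eq_one
      have h1 : (χ ^ orderOf ζ) ((u : Fˣ) : F) = (1 : MulChar F ℂ) ((u : Fˣ) : F) := by
        rw [MulChar.pow_apply_coe, MulChar.one_apply_coe, ← MulChar.coe_equivToUnitHom,
          ← Units.val_pow_eq_pow_val, pow_orderOf_eq_one, Units.val_one]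
      exact (MulChar.eq_iff hu _ _).mpr h1
  -- power congruence machinery for u
  have hupow : ∀ i j : ℕ, i % (2 * m) = j % (2 * m) → (u : F) ^ i = (u : F) ^ j := by
    intro i j h
    have h' : u ^ i = u ^ j := pow_eq_pow_iff_modEq.mpr (by rw [horderu]; exact h)
    rw [← Units.val_pow_eq_pow_val, h', Units.val_pow_eq_pow_val]
  have h2 : ∀ i j : ℕ, i % m = j % m → (u : F) ^ (2 * i) = (u : F) ^ (2 * j) := by
    intro i j h
    exact hupow _ _ (by rw [Nat.mul_mod_mul_left, Nat.mul_mod_mul_left, h])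
  have hu2m : (u : F) ^ (2 * m) = 1 := by
    have h' : u ^ (2 * m) = 1 := by rw [← horderu]; exact pow_orderOf_eq_one u
    rw [← Units.val_pow_eq_pow_val, h', Units.val_one]
  have hum : (u : F) ^ m = -1 := by
    have hsq : ((u : F) ^ m) * ((u : F) ^ m) = 1 := by
      rw [← pow_add]
      have h' : m + m = 2 * m := by ring
      rw [h', hu2m]
    rcases mul_self_eq_one_iff.mp hsq with h | h
    · exfalso
      have h' : u ^ m = 1 := Units.ext (by rw [Units.val_pow_eq_pow_val, h, Units.val_one])
      have hdvd : orderOf u ∣ m := orderOf_dvd_of_pow_eq_one h'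
      rw [horderu] at hdvd
      have := Nat.le_of_dvd hm0 hdvd
      omega
    · exact h
  have hpow_exists : ∀ y : F, y ≠ 0 → ∃ j : ℕ, j < 2 * m ∧ y = (u : F) ^ j := by
    intro y hy
    obtain ⟨k, hk⟩ := hu (Units.mk0 y hy)
    have h2m0 : (0 : ℤ) < 2 * m := by positivity
    refine ⟨(k % (2 * m : ℤ)).toNat, ?_, ?_⟩
    · have := Int.emod_lt_of_pos k h2m0
      have hnn := Int.emod_nonneg k h2m0.ne'
      omega
    · have hz : u ^ (((k % (2 * m : ℤ)).toNat : ℤ)) = u ^ k := by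
        rw [zpow_eq_zpow_iff_modEq, horderu]
        have hnn := Int.emod_nonneg k h2m0.ne'
        have h' : ((k % (2 * m : ℤ)).toNat : ℤ) = k % (2 * m : ℤ) := Int.toNat_of_nonneg hnn
        rw [h']
        unfold Int.ModEq
        push_cast
        rw [Int.emod_emod_of_dvd _ dvd_rfl]
      rw [zpow_natCast] at hz
      have h'' : ((u ^ (k % (2 * m : ℤ)).toNat : Fˣ) : F) = ((u ^ k : Fˣ) : F) := by rw [hz]
      rw [Units.val_pow_eq_pow_val] at h''
      rw [h'']
      simp only at hk
      rw [hk]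
      rfl
  -- the square enumeration
  set σ : ZMod m → F := fun c => (u : F) ^ (2 * c.val) with hσdef
  have hσadd : ∀ a b : ZMod m, σ (a + b) = σ a * σ b := by
    intro a b
    show (u:F) ^ (2 * (a+b).val) = (u:F) ^ (2 * a.val) * (u:F) ^ (2 * b.val)
    rw [← pow_add, ← Nat.mul_add]
    apply h2
    rw [ZMod.val_add, Nat.mod_mod_of_dvd _ dvd_rfl]
  have hσinj : Function.Injective σ := by
    intro a b hab
    have hab' : (u:F)^(2*a.val) = (u:F)^(2*b.val) := hab
    have h' : u ^ (2*a.val) = u ^ (2*b.val) :=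
      Units.ext (by rw [Units.val_pow_eq_pow_val, Units.val_pow_eq_pow_val]; exact hab')
    have hmod := pow_eq_pow_iff_modEq.mp h'
    rw [horderu] at hmod
    unfold Nat.ModEq at hmod
    rw [Nat.mul_mod_mul_left, Nat.mul_mod_mul_left] at hmod
    rw [Nat.mod_eq_of_lt (ZMod.val_lt a), Nat.mod_eq_of_lt (ZMod.val_lt b)] at hmod
    exact ZMod.val_injective _ (by omega)
  have hσne : ∀ c, σ c ≠ 0 := fun c => pow_ne_zero _ (Units.ne_zero u)
  have heven : ∀ j : ℕ, σ ((j : ZMod m)) = (u:F) ^ (2 * j) := by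
    intro j
    show (u:F) ^ (2 * (ZMod.val (j : ZMod m))) = (u:F) ^ (2 * j)
    apply h2
    rw [ZMod.val_natCast, Nat.mod_mod_of_dvd _ dvd_rfl]
  have hσsur : ∀ x : F, (∃ y : F, y ≠ 0 ∧ y ^ 2 = x) → ∃ c, σ c = x := by
    rintro x ⟨y, hy, rfl⟩
    obtain ⟨j, hj, rfl⟩ := hpow_exists y hy
    exact ⟨(j : ZMod m), by rw [heven j, ← pow_mul, Nat.mul_comm]⟩
  have hcover : ∀ x : F, x ≠ 0 → (∃ c, σ c = x) ∨ (∃ c, σ c = -x) := by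
    intro x hx
    obtain ⟨j, hj, rfl⟩ := hpow_exists x hx
    rcases Nat.even_or_odd j with he | ho
    · left
      refine ⟨((j/2 : ℕ) : ZMod m), ?_⟩
      obtain ⟨t, rfl⟩ := he
      rw [heven]
      congr 1
      omega
    · right
      refine ⟨(((j+m)/2 : ℕ) : ZMod m), ?_⟩
      rw [heven]
      have h1 : 2 * ((j+m)/2) = j + m := by
        rcases ho with ⟨t, rfl⟩
        omega
      rw [h1, pow_add, hum]
      ring
  have hdisj : ∀ c c' : ZMod m, σ c ≠ -σ c' := by
    intro c c' hcc
    have h1 : (u:F) ^ (2*c.val) = (u:F) ^ (2*c'.val + m) := by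
      rw [pow_add, hum]
      show σ c = σ c' * (-1)
      rw [hcc]; ring
    have h' : u ^ (2*c.val) = u ^ (2*c'.val + m) :=
      Units.ext (by rw [Units.val_pow_eq_pow_val, Units.val_pow_eq_pow_val]; exact h1)
    have hmod := pow_eq_pow_iff_modEq.mp h'
    rw [horderu] at hmod
    unfold Nat.ModEq at hmod
    have e1 : (2*c.val) % (2*m) % 2 = (2*c'.val + m) % (2*m) % 2 := by rw [hmod]
    rw [Nat.mod_mod_of_dvd _ ⟨m, rfl⟩, Nat.mod_mod_of_dvd _ ⟨m, rfl⟩] at e1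
    omega
  -- the matching equivalence between `Fin m` and `ZMod m`
  have hse : ∀ i : Fin m, ∃ c : ZMod m, σ c = s i :=
    fun i => hσsur _ ((hsimg (s i)).mp ⟨i, rfl⟩)
  choose g hg using hse
  have hginj : Function.Injective g := by
    intro i j hij
    apply hs
    rw [← hg i, ← hg j, hij]
  have hgbij : Function.Bijective g :=
    (Fintype.bijective_iff_injective_and_card g).mpr ⟨hginj, by simp [ZMod.card]⟩
  set e : Fin m ≃ ZMod m := Equiv.ofBijective g hgbij with he
  -- the equivalence Fin m ≃ ZMod m by natCast
  set efin : Fin m ≃ ZMod m :=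
    { toFun := fun i => ((i : ℕ) : ZMod m)
      invFun := fun a => ⟨a.val, ZMod.val_lt a⟩
      left_inv := fun i => by
        ext
        simp [ZMod.val_natCast_of_lt i.isLt]
      right_inv := fun a => by simp [ZMod.natCast_rightInverse a] } with hefin
  -- matrices
  set A : MulChar F ℂ := χ ^ r with hA
  set f : F → ℂ := fun x => A (1 + x) + A (1 - x) with hf
  set C : Matrix (ZMod m) (ZMod m) ℂ := Matrix.of (fun a b => f (σ (b - a))) with hC
  set M : Matrix (ZMod m) (ZMod m) ℂ :=
    Matrix.of (fun a b => A (σ a + σ b) + A (σ a - σ b)) with hM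
  have hdetM : (Matrix.of fun i j => A (s i + s j) + A (s i - s j)).det = M.det := by
    rw [← Matrix.det_submatrix_equiv_self e M]
    congr 1
    ext i j
    simp only [Matrix.submatrix_apply, Matrix.of_apply, hM]
    have h1 : σ (e i) = s i := hg i
    have h2' : σ (e j) = s j := hg j
    rw [h1, h2']
  have hab : ∀ a b : ZMod m, σ a * σ (b - a) = σ b := by
    intro a b
    rw [← hσadd]
    congr 1
    ring
  have hMDC : M = Matrix.diagonal (fun a => A (σ a)) * C := by
    ext a b
    rw [Matrix.diagonal_mul]
    show A (σ a + σ b) + A (σ a - σ b) = A (σ a) * (A (1 + σ (b - a)) + A (1 - σ (b - a)))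
    rw [mul_add, ← _root_.map_mul, ← _root_.map_mul, mul_add, mul_one, mul_sub, mul_one, hab a b]
  have hsumval : ∑ a : ZMod m, a.val = ∑ i ∈ range m, i := by
    rw [← Fin.sum_univ_eq_sum_range]
    exact (Fintype.sum_equiv efin (fun i => ((efin i).val)) (fun a => a.val) (fun i => rfl)).symm
      |>.trans (Finset.sum_congr rfl (fun i _ => ZMod.val_natCast_of_lt i.isLt))
  have hprodσ : (∏ a : ZMod m, σ a) = 1 := by
    show (∏ a : ZMod m, (u:F) ^ (2 * a.val)) = 1
    rw [Finset.prod_pow_eq_pow_sum]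
    obtain ⟨t, ht⟩ : ∃ t, m = 2*t+1 := ⟨m/2, by omega⟩
    have hsum : ∑ a : ZMod m, 2 * a.val = (2*m) * t := by
      rw [← Finset.mul_sum, hsumval]
      have h1 : (∑ i ∈ range m, i) * 2 = m * (m - 1) := Finset.sum_range_id_mul_two m
      have h2' : m - 1 = 2 * t := by omega
      rw [h2'] at h1
      have : 2 * ∑ i ∈ range m, i = m * (2 * t) := by omega
      rw [this]
      ring
    rw [hsum, pow_mul, hu2m, one_pow]
  have hdetD : (Matrix.diagonal (fun a : ZMod m => A (σ a))).det = 1 := by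
    rw [Matrix.det_diagonal, ← _root_.map_prod, hprodσ, _root_.map_one]
  -- the DFT-type matrix
  set E : ZMod m → ℂ := fun t => ((ζ : ℂ)) ^ (2 * t.val) with hE
  have hζ2m : (ζ : ℂ) ^ (2*m) = 1 := by
    have h' : ζ ^ (2 * m) = 1 := by rw [← horderζ]; exact pow_orderOf_eq_one ζ
    rw [← Units.val_pow_eq_pow_val, h', Units.val_one]
  have hζpow : ∀ i j : ℕ, i % (2 * m) = j % (2 * m) → (ζ : ℂ) ^ i = (ζ : ℂ) ^ j := by
    intro i j h
    have h' : ζ ^ i = ζ ^ j := pow_eq_pow_iff_modEq.mpr (by rw [horderζ]; exact h)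
    rw [← Units.val_pow_eq_pow_val, h', Units.val_pow_eq_pow_val]
  have hζ2 : ∀ i j : ℕ, i % m = j % m → (ζ : ℂ) ^ (2 * i) = (ζ : ℂ) ^ (2 * j) := by
    intro i j h
    exact hζpow _ _ (by rw [Nat.mul_mod_mul_left, Nat.mul_mod_mul_left, h])
  have hEadd : ∀ a b : ZMod m, E (a + b) = E a * E b := by
    intro a b
    show (ζ:ℂ) ^ (2 * (a+b).val) = (ζ:ℂ) ^ (2 * a.val) * (ζ:ℂ) ^ (2 * b.val)
    rw [← pow_add, ← Nat.mul_add]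
    apply hζ2
    rw [ZMod.val_add, Nat.mod_mod_of_dvd _ dvd_rfl]
  set W : Matrix (ZMod m) (ZMod m) ℂ := Matrix.of (fun a b => E (a * b)) with hW
  have hWval : ∀ a b : ZMod m, W a b = (ζ : ℂ) ^ (2 * (a.val * b.val)) := by
    intro a b
    show (ζ:ℂ) ^ (2 * (a*b).val) = (ζ:ℂ) ^ (2 * (a.val * b.val))
    apply hζ2
    rw [ZMod.val_mul, Nat.mod_mod_of_dvd _ dvd_rfl]
  have hWdet : W.det ≠ 0 := by
    rw [← Matrix.det_submatrix_equiv_self efin W]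
    have hsub : W.submatrix efin efin
        = Matrix.vandermonde (fun i : Fin m => ((ζ:ℂ)^2) ^ (i : ℕ)) := by
      ext i j
      rw [Matrix.submatrix_apply, Matrix.vandermonde_apply]
      have h1 : W (efin i) (efin j) = (ζ:ℂ) ^ (2 * ((efin i).val * (efin j).val)) :=
        hWval _ _
      have h2' : (efin i).val = (i : ℕ) := ZMod.val_natCast_of_lt i.isLt
      have h3 : (efin j).val = (j : ℕ) := ZMod.val_natCast_of_lt j.isLt
      rw [h1, h2', h3, ← pow_mul, ← pow_mul]
    rw [hsub, Matrix.det_vandermonde_ne_zero_iff]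
    intro i j hij
    have h' : ζ ^ (2 * (i:ℕ)) = ζ ^ (2 * (j:ℕ)) := by
      apply Units.ext
      rw [Units.val_pow_eq_pow_val, Units.val_pow_eq_pow_val]
      simpa [pow_mul] using hij
    have hmod := pow_eq_pow_iff_modEq.mp h'
    rw [horderζ] at hmod
    unfold Nat.ModEq at hmod
    rw [Nat.mul_mod_mul_left, Nat.mul_mod_mul_left,
      Nat.mod_eq_of_lt i.isLt, Nat.mod_eq_of_lt j.isLt] at hmod
    exact Fin.ext (by omega)
  set lam : ZMod m → ℂ := fun j => ∑ c : ZMod m, f (σ c) * E (c * j) with hlam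
  have hCW : C * W = W * Matrix.diagonal lam := by
    ext a j
    rw [Matrix.mul_apply, Matrix.mul_diagonal]
    have h1 : ∀ c : ZMod m, C a (c + a) * W (c + a) j = (f (σ c) * E (c * j)) * E (a * j) := by
      intro c
      have hca : c + a - a = c := by ring
      have hdist : (c + a) * j = c * j + a * j := by ring
      show f (σ (c + a - a)) * E ((c + a) * j) = (f (σ c) * E (c * j)) * E (a * j)
      rw [hca, hdist, hEadd]
      ring
    calc ∑ b, C a b * W b j
        = ∑ c, C a (c + a) * W (c + a) j :=
          (Fintype.sum_equiv (Equiv.addRight a) _ _ (fun c => rfl)).symm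
      _ = ∑ c, (f (σ c) * E (c * j)) * E (a * j) := by
          exact Finset.sum_congr rfl (fun c _ => h1 c)
      _ = (∑ c, f (σ c) * E (c * j)) * E (a * j) := by rw [← Finset.sum_mul]
      _ = W a j * lam j := by rw [mul_comm]; rfl
  have hdetC : C.det = ∏ j : ZMod m, lam j := by
    have h1 := congrArg Matrix.det hCW
    rw [Matrix.det_mul, Matrix.det_mul, Matrix.det_diagonal, mul_comm (C.det)] at h1
    exact mul_left_cancel₀ hWdet h1
  have hdetfinal : M.det = ∏ j : ZMod m, lam j := by
    rw [hMDC, Matrix.det_mul, hdetD, one_mul, hdetC]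
  -- Jacobi sums are the eigenvalues
  have hBneg : ∀ k : ℕ, ∀ x : F, (χ ^ (2*k)) (-x) = (χ ^ (2*k)) x := by
    intro k x
    have h1 : (-x : F) = (-1) * x := by ring
    rw [h1, _root_.map_mul]
    have h2' : ((-1 : Fˣ) : F) = (-1 : F) := by simp
    have h3 : (χ ^ (2*k)) (-1 : F) = 1 := by
      rw [← h2', MulChar.pow_apply_coe, h2']
      have h4 : (χ (-1 : F)) ^ (2*k) = ((χ (-1 : F)) ^ 2) ^ k := by rw [← pow_mul]
      rw [h4, ← _root_.map_pow]
      norm_num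
    rw [h3, one_mul]
  have hBE : ∀ k : ℕ, ∀ c : ZMod m, (χ ^ (2*k)) (σ c) = E (c * ((2*k : ℕ) : ZMod m)) := by
    intro k c
    show (χ ^ (2*k)) ((u:F) ^ (2 * c.val)) = (ζ:ℂ) ^ (2 * (c * ((2*k : ℕ) : ZMod m)).val)
    rw [_root_.map_pow, MulChar.pow_apply_coe, ← MulChar.coe_equivToUnitHom χ u, ← hζ,
      ← pow_mul]
    have hcong : (2 * k) * (2 * c.val) = 2 * (c.val * (2 * k)) := by ring
    rw [hcong]
    apply hζ2
    rw [ZMod.val_mul, ZMod.val_natCast, Nat.mod_mod_of_dvd _ dvd_rfl]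
    exact (Nat.ModEq.mul_left c.val (Nat.mod_modEq (2*k) m)).symm
  have hB0 : ∀ k : ℕ, (χ ^ (2*k)) (0 : F) = 0 :=
    fun k => MulChar.map_nonunit _ not_isUnit_zero
  have hJ : ∀ k : ℕ, jacobiSum A (χ ^ (2*k)) = lam ((2*k : ℕ) : ZMod m) := by
    intro k
    set B : MulChar F ℂ := χ ^ (2*k) with hB
    have step1 : jacobiSum A B = ∑ t : F, A (1 - t) * B t := by
      rw [jacobiSum]
      refine (Fintype.sum_equiv (Equiv.subLeft (1:F)) _ _ (fun t => ?_)).symm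
      simp [sub_sub_cancel]
    have step2 : ∑ t : F, A (1 - t) * B t = ∑ c : ZMod m, f (σ c) * B (σ c) := by
      set S1 : Finset F := Finset.image σ Finset.univ with hS1
      set S2 : Finset F := Finset.image (fun c => -σ c) Finset.univ with hS2
      have hdisj' : Disjoint S1 S2 := by
        rw [Finset.disjoint_left]
        rintro x hx1 hx2
        obtain ⟨c, _, rfl⟩ := Finset.mem_image.mp hx1
        obtain ⟨c', _, hc'⟩ := Finset.mem_image.mp hx2
        exact hdisj c c' (by rw [← hc'])
      have hcov : ∀ t : F, t ∉ S1 ∪ S2 → A (1 - t) * B t = 0 := by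
        intro t ht
        have ht0 : t = 0 := by
          by_contra ht0
          rcases hcover t ht0 with ⟨c, hc⟩ | ⟨c, hc⟩
          · exact ht (Finset.mem_union_left _ (Finset.mem_image.mpr ⟨c, Finset.mem_univ c, hc⟩))
          · apply ht
            apply Finset.mem_union_right
            apply Finset.mem_image.mpr
            exact ⟨c, Finset.mem_univ c, by rw [hc]; ring⟩
        rw [ht0, hB0 k, mul_zero]
      have hsplit : ∑ t : F, A (1 - t) * B t = ∑ t ∈ S1 ∪ S2, A (1 - t) * B t := by
        refine (Finset.sum_subset (Finset.subset_univ _) (fun t _ ht => hcov t ht)).symm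
      rw [hsplit, Finset.sum_union hdisj']
      have hs1 : ∑ t ∈ S1, A (1 - t) * B t = ∑ c : ZMod m, A (1 - σ c) * B (σ c) :=
        Finset.sum_image (fun c _ c' _ h => hσinj h)
      have hs2 : ∑ t ∈ S2, A (1 - t) * B t = ∑ c : ZMod m, A (1 + σ c) * B (σ c) := by
        rw [Finset.sum_image (fun c _ c' _ h => hσinj (neg_injective h))]
        refine Finset.sum_congr rfl (fun c _ => ?_)
        rw [sub_neg_eq_add, hB, hBneg k (σ c)]
      rw [hs1, hs2, ← Finset.sum_add_distrib]
      refine Finset.sum_congr rfl (fun c _ => ?_)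
      show A (1 - σ c) * B (σ c) + A (1 + σ c) * B (σ c) = (A (1 + σ c) + A (1 - σ c)) * B (σ c)
      ring
    rw [step1, step2]
    refine Finset.sum_congr rfl (fun c _ => ?_)
    rw [hB, hBE k c]
  -- final reindexing of the product
  have h2unit : IsUnit (2 : ZMod m) := by
    have : ((2 : ℕ) : ZMod m) = (2 : ZMod m) := by push_cast; rfl
    rw [← this, ZMod.isUnit_iff_coprime]
    exact Nat.coprime_two_left.mpr (Nat.odd_iff.mpr hmodd)
  have hbij2 : Function.Bijective (fun j : ZMod m => (2 : ZMod m) * j) := by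
    refine Finite.injective_iff_bijective.mp ?_
    exact fun a b h => h2unit.mul_right_injective h
  have hprodfinal : ∏ k ∈ range m, lam ((2*k : ℕ) : ZMod m) = ∏ j : ZMod m, lam j := by
    have h1 : ∀ k : ℕ, ((2*k : ℕ) : ZMod m) = (2 : ZMod m) * ((k : ℕ) : ZMod m) := by
      intro k; push_cast; ring
    calc ∏ k ∈ range m, lam ((2*k : ℕ) : ZMod m)
        = ∏ i : Fin m, lam ((2 : ZMod m) * ((i : ℕ) : ZMod m)) := by
          rw [← Fin.prod_univ_eq_prod_range (fun k => lam ((2*k : ℕ) : ZMod m)) m]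
          exact Finset.prod_congr rfl (fun i _ => by rw [h1])
      _ = ∏ j : ZMod m, lam ((2 : ZMod m) * j) :=
          Fintype.prod_equiv efin _ _ (fun i => rfl)
      _ = ∏ j : ZMod m, lam j :=
          Fintype.prod_bijective _ hbij2 _ _ (fun j => rfl)
  calc (Matrix.of fun i j => A (s i + s j) + A (s i - s j)).det
      = M.det := hdetM
    _ = ∏ j : ZMod m, lam j := hdetfinal
    _ = ∏ k ∈ range m, lam ((2*k : ℕ) : ZMod m) := hprodfinal.symm
    _ = ∏ k ∈ range m, jacobiSum A (χ ^ (2*k)) :=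
        Finset.prod_congr rfl (fun k _ => (hJ k).symm)
end

section
/- Let q = p^n ≡ 3 (mod 4) be an odd prime power, χ a generator of the character group of F_q^×, and let 2 ≤ r ≤ q-2 be even. Then ∏_{k=0}^{(q-3)/2} J_q(χ^r, χ^{2k}) = G_q(χ^r)^{(q-1)/2} / q. -/
/-- For `q = p^n ≡ 3 (mod 4)`, `χ` a generator of the character group of
`F_q^×` and `2 ≤ r ≤ q-2` even,
`∏_{k=0}^{(q-3)/2} J_q(χ^r, χ^{2k}) = G_q(χ^r)^{(q-1)/2} / q`. -/
theorem prod_jacobiSum_even_r (p n q : ℕ) [Fact p.Prime] (hn : 0 < n) (hq : q = p ^ n)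
    (hq3 : q % 4 = 3)
    (F : Type*) [Field F] [Fintype F] [Algebra (ZMod p) F] (hcard : Fintype.card F = q)
    (χ : MulChar F ℂ) (hχ : ∀ ψ : MulChar F ℂ, ψ ∈ Subgroup.zpowers χ)
    (r : ℕ) (hr1 : 2 ≤ r) (hr2 : r ≤ q - 2) (hreven : Even r) :
    ∏ k ∈ Finset.range ((q - 1) / 2), jacobiSum (χ ^ r) (χ ^ (2 * k))
      = (∑ x : F, (χ ^ r) x
          * Complex.exp (2 * Real.pi * Complex.I
              * ((Algebra.trace (ZMod p) F x).val : ℂ) / p)) ^ ((q - 1) / 2) / q := by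
  classical
  have hpchar : p = ringChar F := by
    have : CharP F p := charP_of_injective_algebraMap (algebraMap (ZMod p) F).injective p
    exact (ringChar.eq F p).symm
  subst hpchar
  set p := ringChar F with hpdef
  -- basic numerology
  have hq7 : 7 ≤ q := by omega
  set m : ℕ := (q - 1) / 2 with hm
  have hq1 : q - 1 = 2 * m := by omega
  have hmodd : m % 2 = 1 := by omega
  have hm3 : 3 ≤ m := by omega
  have hqodd : q % 2 = 1 := by omega
  obtain ⟨s, hs⟩ := hreven
  have hreven' : Even r := ⟨s, hs⟩
  have hr3 : r ≤ q - 3 := by omega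
  have hs2 : 2 * s = r := by omega
  have hs1 : 1 ≤ s := by omega
  have hsm : s ≤ m - 1 := by omega
  set k₀ : ℕ := m - s with hk₀
  have hk₀1 : 1 ≤ k₀ := by omega
  have hk₀m : k₀ < m := by omega
  have hsk₀ : s ≠ k₀ := by omega
  have hmod : ∀ x : ℕ, x < 2 * m → x % m = if x < m then x else x - m := by
    intro x hx
    split_ifs with h
    · exact Nat.mod_eq_of_lt h
    · rw [Nat.mod_eq_sub_mod (by omega)]
      exact Nat.mod_eq_of_lt (by omega)
  -- the order of χ is q - 1
  have hord : orderOf χ = q - 1 := by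
    have h1 : orderOf χ ∣ q - 1 := hcard ▸ MulChar.orderOf_dvd_card_sub_one F χ
    have hcardu : Fintype.card Fˣ = q - 1 := by rw [Fintype.card_units, hcard]
    obtain ⟨χ₀, hχ₀⟩ := MulChar.exists_mulChar_orderOf_eq_card_units (R := ℂ) F
      (hcardu ▸ Complex.isPrimitiveRoot_exp (q - 1) (by omega))
    have h2 : q - 1 ∣ orderOf χ := by
      rw [← hcardu, ← hχ₀]
      exact orderOf_dvd_of_mem_zpowers (hχ χ₀)
    exact Nat.dvd_antisymm h1 h2
  have hpow_ne : ∀ j : ℕ, 0 < j → j < q - 1 → χ ^ j ≠ 1 := fun j h1 h2 =>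
    pow_ne_one_of_lt_orderOf (by omega) (hord ▸ h2)
  have hχr : χ ^ r ≠ 1 := hpow_ne r (by omega) (by omega)
  -- the additive character
  set ψ : AddChar F ℂ :=
    (ZMod.stdAddChar (N := p)).compAddMonoidHom (Algebra.trace (ZMod p) F).toAddMonoidHom with hψ
  have hψval : ∀ x : F, ψ x
      = Complex.exp (2 * Real.pi * Complex.I * ((Algebra.trace (ZMod p) F x).val : ℂ) / p) := by
    intro x
    have h1 : (((Algebra.trace (ZMod p) F x).val : ℤ) : ZMod p) = Algebra.trace (ZMod p) F x := by
      push_cast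
      simp [ZMod.natCast_val, ZMod.cast_id]
    have := ZMod.stdAddChar_coe (N := p) ((Algebra.trace (ZMod p) F x).val : ℤ)
    rw [h1] at this
    simpa [ψ] using this
  have hψp : ψ.IsPrimitive := by
    refine AddChar.IsPrimitive.of_ne_one ?_
    obtain ⟨a, ha⟩ := FiniteField.trace_to_zmod_nondegenerate F (one_ne_zero (α := F))
    rw [one_mul] at ha
    intro h
    apply ha
    have h1 : ψ a = 1 := by rw [h]; rfl
    have h2 : ZMod.stdAddChar (Algebra.trace (ZMod p) F a) = 1 := h1
    exact ((AddChar.IsPrimitive.zmod_char_eq_one_iff p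
      (ZMod.isPrimitive_stdAddChar p) _).mp h2)
  -- the Gauss sum
  set Gr : ℂ := gaussSum (χ ^ r) ψ with hGr
  have hrhs : (∑ x : F, (χ ^ r) x
      * Complex.exp (2 * Real.pi * Complex.I * ((Algebra.trace (ZMod p) F x).val : ℂ) / p))
      = Gr := by
    rw [hGr, gaussSum]
    exact Finset.sum_congr rfl fun x _ => by rw [hψval x]
  have hcast : (Fintype.card F : ℂ) ≠ 0 := by
    rw [hcard]; exact_mod_cast (by omega : q ≠ 0)
  have hGne : ∀ j : ℕ, 0 < j → j < q - 1 → gaussSum (χ ^ j) ψ ≠ 0 := fun j h1 h2 =>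
    gaussSum_ne_zero_of_nontrivial hcast (hpow_ne j h1 h2) hψp
  -- notation
  set f : ℕ → ℂ := fun k => jacobiSum (χ ^ r) (χ ^ (2 * k)) with hf
  set g : ℕ → ℂ := fun k => gaussSum (χ ^ (2 * k)) ψ with hg
  set S : Finset ℕ := ((Finset.range m).erase 0).erase k₀ with hS
  have hk₀mem : k₀ ∈ (Finset.range m).erase 0 := by
    simp only [Finset.mem_erase, Finset.mem_range]; omega
  have h0mem : (0 : ℕ) ∈ Finset.range m := by simp; omega
  have hsS : s ∈ S := by
    simp only [hS, Finset.mem_erase, Finset.mem_range]; omega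
  -- χ^(2k₀) = (χ^r)⁻¹
  have hk₀inv : χ ^ (2 * k₀) = (χ ^ r)⁻¹ := by
    symm
    apply inv_eq_of_mul_eq_one_right
    rw [← pow_add]
    have h : r + 2 * k₀ = q - 1 := by omega
    rw [h, ← hord, pow_orderOf_eq_one]
  -- (χ^r)(-1) = 1
  have hχrneg : (χ ^ r) (-1 : F) = 1 := by
    rw [MulChar.pow_apply' χ (by omega : r ≠ 0), ← map_pow, hreven'.neg_one_pow, map_one]
  -- key identity on S
  have hkey : ∀ k ∈ S, g ((s + k) % m) * f k = Gr * g k := by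
    intro k hk
    simp only [hS, Finset.mem_erase, Finset.mem_range] at hk
    obtain ⟨hkk₀, hk0, hkm⟩ := hk
    have hmul : χ ^ r * χ ^ (2 * k) = χ ^ (2 * ((s + k) % m)) := by
      rw [← pow_add]
      have h1 : χ ^ (2 * ((s + k) % m)) = χ ^ ((2 * (s + k)) % (q - 1)) := by
        rw [hq1, Nat.mul_mod_mul_left]
      rw [h1, ← hord, pow_mod_orderOf]
      congr 1; omega
    have hne : χ ^ r * χ ^ (2 * k) ≠ 1 := by
      rw [hmul]
      rw [hmod (s + k) (by omega)]
      split_ifs with h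
      · exact hpow_ne _ (by omega) (by omega)
      · exact hpow_ne _ (by omega) (by omega)
    have h2 := jacobiSum_mul_nontrivial hne ψ
    rw [hmul] at h2
    exact h2
  -- product over S
  have hcardS : S.card = m - 2 := by
    rw [hS, Finset.card_erase_of_mem hk₀mem, Finset.card_erase_of_mem h0mem,
      Finset.card_range]
    omega
  have hprodS : (∏ k ∈ S, g ((s + k) % m)) * (∏ k ∈ S, f k)
      = Gr ^ (m - 2) * ∏ k ∈ S, g k := by
    rw [← Finset.prod_mul_distrib, Finset.prod_congr rfl hkey, Finset.prod_mul_distrib,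
      Finset.prod_const, hcardS]
  -- reindexing
  set S' : Finset ℕ := ((Finset.range m).erase 0).erase s with hS'
  have hreind : (∏ k ∈ S, g ((s + k) % m)) = ∏ k ∈ S', g k := by
    apply Finset.prod_nbij' (fun k => (s + k) % m) (fun k => (k + (m - s)) % m)
    · intro a ha
      simp only [hS, Finset.mem_erase, Finset.mem_range] at ha
      simp only [hS', Finset.mem_erase, Finset.mem_range]
      rw [hmod (s + a) (by omega)]
      split_ifs <;> omega
    · intro b hb
      simp only [hS', Finset.mem_erase, Finset.mem_range] at hb
      simp only [hS, Finset.mem_erase, Finset.mem_range]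
      rw [hmod (b + (m - s)) (by omega)]
      split_ifs <;> omega
    · intro a ha
      simp only [hS, Finset.mem_erase, Finset.mem_range] at ha
      rw [hmod (s + a) (by omega)]
      split_ifs with h
      · rw [hmod _ (by omega)]; split_ifs <;> omega
      · rw [hmod _ (by omega)]; split_ifs <;> omega
    · intro b hb
      simp only [hS', Finset.mem_erase, Finset.mem_range] at hb
      rw [hmod (b + (m - s)) (by omega)]
      split_ifs with h
      · rw [hmod _ (by omega)]; split_ifs <;> omega
      · rw [hmod _ (by omega)]; split_ifs <;> omega
    · intro a _; rfl
  -- split off the distinguished terms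
  have hk₀S' : k₀ ∈ S' := by
    simp only [hS', Finset.mem_erase, Finset.mem_range]; omega
  have hT : S.erase s = S'.erase k₀ := by
    rw [hS, hS', Finset.erase_right_comm]
  have e1 : (∏ k ∈ S', g k) = g k₀ * ∏ k ∈ S.erase s, g k := by
    rw [hT]; exact (Finset.mul_prod_erase _ _ hk₀S').symm
  have e2 : (∏ k ∈ S, g k) = g s * ∏ k ∈ S.erase s, g k :=
    (Finset.mul_prod_erase _ _ hsS).symm
  have hCD : (g k₀ * ∏ k ∈ S.erase s, g k) * (∏ k ∈ S, f k)
      = Gr ^ (m - 2) * (g s * ∏ k ∈ S.erase s, g k) := by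
    rw [← e1, ← e2, ← hreind]
    exact hprodS
  have hTne : (∏ k ∈ S.erase s, g k) ≠ 0 := by
    rw [Finset.prod_ne_zero_iff]
    intro k hk
    have hk' := Finset.mem_of_mem_erase hk
    simp only [hS, Finset.mem_erase, Finset.mem_range] at hk'
    exact hGne (2 * k) (by omega) (by omega)
  have hgs : g s = Gr := by show gaussSum (χ ^ (2 * s)) ψ = Gr; rw [hs2]
  have hmain : g k₀ * (∏ k ∈ S, f k) = Gr ^ (m - 1) := by
    have h1 : (g k₀ * ∏ k ∈ S, f k) * (∏ k ∈ S.erase s, g k)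
        = Gr ^ (m - 1) * (∏ k ∈ S.erase s, g k) := by
      have h2 : Gr ^ (m - 1) = Gr ^ (m - 2) * Gr := by
        rw [← pow_succ]; congr 1; omega
      rw [h2]
      calc (g k₀ * ∏ k ∈ S, f k) * (∏ k ∈ S.erase s, g k)
          = (g k₀ * ∏ k ∈ S.erase s, g k) * (∏ k ∈ S, f k) := by ring
        _ = Gr ^ (m - 2) * (g s * ∏ k ∈ S.erase s, g k) := hCD
        _ = Gr ^ (m - 2) * Gr * (∏ k ∈ S.erase s, g k) := by rw [hgs]; ring
    exact mul_right_cancel₀ hTne h1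
  -- Gr * g k₀ = q
  have hGG : Gr * g k₀ = (q : ℂ) := by
    have h1 : g k₀ = gaussSum (χ ^ r)⁻¹ ψ⁻¹ := by
      show gaussSum (χ ^ (2 * k₀)) ψ = _
      rw [hk₀inv, ← mul_gaussSum_inv_eq_gaussSum (χ ^ r)⁻¹ ψ,
        MulChar.inv_apply', inv_neg_one, hχrneg, one_mul]
    rw [h1, gaussSum_mul_gaussSum_eq_card hχr hψp, hcard]
  -- assemble the full product
  have hf0 : f 0 = -1 := by
    show jacobiSum (χ ^ r) (χ ^ (2 * 0)) = -1
    rw [mul_zero, pow_zero, jacobiSum_comm, jacobiSum_one_nontrivial hχr]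
  have hfk₀ : f k₀ = -1 := by
    show jacobiSum (χ ^ r) (χ ^ (2 * k₀)) = -1
    rw [hk₀inv, jacobiSum_nontrivial_inv hχr, hχrneg]
  have hsplit : (∏ k ∈ Finset.range m, f k) = ∏ k ∈ S, f k := by
    rw [← Finset.mul_prod_erase _ _ h0mem, ← Finset.mul_prod_erase _ _ hk₀mem, ← hS,
      hf0, hfk₀]
    ring
  -- finish
  rw [hrhs]
  rw [eq_div_iff (by exact_mod_cast (by omega : q ≠ 0) : (q : ℂ) ≠ 0)]
  calc (∏ k ∈ Finset.range m, f k) * (q : ℂ)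
      = Gr * (g k₀ * (∏ k ∈ S, f k)) := by rw [← hGG, hsplit]; ring
    _ = Gr * Gr ^ (m - 1) := by rw [hmain]
    _ = Gr ^ m := by rw [← pow_succ']; congr 1; omega
end

section
/- Let q ≡ 3 (mod 4) be an odd prime power, χ a generator of the character group of F_q^×, 1 ≤ r ≤ q-2, and let s_1, ..., s_{(q-1)/2} be the nonzero squares of F_q. For every even integer k with 1 ≤ k ≤ (q-1)/2, the column vector v_k = (χ^k(s_1), ..., χ^k(s_{(q-1)/2}))^T is an eigenvector of the matrix M = [χ^r(1 + s_j/s_i) + χ^r(1 - s_j/s_i)]_{1≤i,j≤(q-1)/2} with eigenvalue J_q(χ^r, χ^k). -/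
/-- For `q ≡ 3 (mod 4)`, `χ` a generator, `1 ≤ r ≤ q-2`, and `k` even with
`1 ≤ k ≤ (q-1)/2`, the vector `(χ^k(s_1),…,χ^k(s_{(q-1)/2}))` is an eigenvector of
`M = [χ^r(1 + s_j/s_i) + χ^r(1 - s_j/s_i)]` with eigenvalue `J_q(χ^r, χ^k)`. -/
theorem eigenvector_even_k (p n q : ℕ) [Fact p.Prime] (hn : 0 < n) (hq : q = p ^ n)
    (hq3 : q % 4 = 3)
    (F : Type*) [Field F] [Fintype F] (hcard : Fintype.card F = q)
    (χ : MulChar F ℂ) (hχ : ∀ ψ : MulChar F ℂ, ψ ∈ Subgroup.zpowers χ)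
    (r : ℕ) (hr1 : 1 ≤ r) (hr2 : r ≤ q - 2)
    (s : Fin ((q - 1) / 2) → F) (hs : Function.Injective s)
    (hsimg : ∀ x : F, (∃ i, s i = x) ↔ ∃ y : F, y ≠ 0 ∧ y ^ 2 = x)
    (k : ℕ) (hk1 : 1 ≤ k) (hk2 : k ≤ (q - 1) / 2) (hkeven : Even k) :
    (Matrix.of fun i j => (χ ^ r) (1 + s j / s i) + (χ ^ r) (1 - s j / s i)).mulVec
        (fun i => (χ ^ k) (s i))
      = jacobiSum (χ ^ r) (χ ^ k) • (fun i => (χ ^ k) (s i)) := by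
  classical
  have hq2 : Fintype.card F % 4 = 3 := by rw [hcard]; exact hq3
  have hchar2 : ringChar F ≠ 2 := by
    intro h
    have h2 := FiniteField.even_card_iff_char_two.mp h
    omega
  set ψ := χ ^ r with hψ
  set φ := χ ^ k with hφ
  -- φ is trivial on -1
  have hneg1 : φ (-1 : F) = 1 := by
    obtain ⟨m, hm⟩ := hkeven
    rw [hφ, MulChar.pow_apply' χ (by omega : k ≠ 0), hm, pow_add, ← mul_pow,
      ← map_mul, neg_mul_neg, one_mul, map_one, one_pow]
  have hnegx : ∀ x : F, φ (-x) = φ x := by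
    intro x
    rw [show -x = -1 * x by ring, map_mul, hneg1, one_mul]
  set S : Finset F := Finset.univ.filter (fun x => ∃ y : F, y ≠ 0 ∧ y ^ 2 = x) with hSdef
  have hmemS : ∀ x : F, x ∈ S ↔ ∃ y : F, y ≠ 0 ∧ y ^ 2 = x := by
    intro x; simp [hSdef]
  have hS0 : ∀ x ∈ S, x ≠ 0 := by
    intro x hx; obtain ⟨y, hy, rfl⟩ := (hmemS x).mp hx; exact pow_ne_zero _ hy
  have hsiS : ∀ i, s i ∈ S := fun i => (hmemS _).mpr ((hsimg (s i)).mp ⟨i, rfl⟩)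
  have hSdiv : ∀ x ∈ S, ∀ z ∈ S, x / z ∈ S := by
    intro x hx z hz
    obtain ⟨a, ha, rfl⟩ := (hmemS x).mp hx
    obtain ⟨b, hb, rfl⟩ := (hmemS z).mp hz
    exact (hmemS _).mpr ⟨a / b, div_ne_zero ha hb, by field_simp⟩
  have hSmul : ∀ x ∈ S, ∀ z ∈ S, x * z ∈ S := by
    intro x hx z hz
    obtain ⟨a, ha, rfl⟩ := (hmemS x).mp hx
    obtain ⟨b, hb, rfl⟩ := (hmemS z).mp hz
    exact (hmemS _).mpr ⟨a * b, mul_ne_zero ha hb, by ring⟩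
  have hns : ∀ x : F, x ≠ 0 → x ∉ S → -x ∈ S := by
    intro x hx hxS
    have hnsq : ¬ IsSquare x := by
      rintro ⟨a, ha⟩
      have ha0 : a ≠ 0 := by
        rintro rfl; rw [mul_zero] at ha; exact hx ha
      exact hxS ((hmemS x).mpr ⟨a, ha0, by rw [ha]; ring⟩)
    have h1 : quadraticChar F (-x) = 1 := by
      rw [show -x = -1 * x by ring, map_mul, quadraticChar_neg_one hchar2,
        ZMod.χ₄_nat_three_mod_four hq2, quadraticChar_neg_one_iff_not_isSquare.mpr hnsq]
      ring
    obtain ⟨a, ha⟩ := (quadraticChar_one_iff_isSquare (neg_ne_zero.mpr hx)).mp h1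
    have ha0 : a ≠ 0 := by
      rintro rfl; rw [mul_zero] at ha; exact hx (by rw [← neg_eq_zero, ha])
    exact (hmemS _).mpr ⟨a, ha0, by rw [pow_two]; exact ha.symm⟩
  set g : F → ℂ := fun x => (ψ (1 + x) + ψ (1 - x)) * φ x with hg
  have hgneg : ∀ x : F, g (-x) = g x := by
    intro x
    simp only [hg]
    rw [hnegx, sub_neg_eq_add, ← sub_eq_add_neg, add_comm (ψ (1 - x))]
  -- total sum over F
  have htot : ∑ x : F, g x = 2 * jacobiSum ψ φ := by
    have h1 : ∑ x : F, ψ (1 + x) * φ x = ∑ x : F, ψ (1 - x) * φ x := by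
      refine Fintype.sum_equiv (Equiv.neg F) _ _ fun x => ?_
      rw [Equiv.neg_apply, hnegx, sub_neg_eq_add]
    have h2 : ∑ x : F, ψ (1 - x) * φ x = jacobiSum ψ φ := by
      rw [jacobiSum_comm ψ φ]
      simp only [jacobiSum]
      exact Finset.sum_congr rfl fun x _ => mul_comm _ _
    calc ∑ x : F, g x = ∑ x : F, (ψ (1 + x) * φ x + ψ (1 - x) * φ x) := by
          refine Finset.sum_congr rfl fun x _ => ?_
          simp only [hg]; ring
      _ = (∑ x : F, ψ (1 + x) * φ x) + ∑ x : F, ψ (1 - x) * φ x :=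
          Finset.sum_add_distrib
      _ = 2 * jacobiSum ψ φ := by rw [h1, h2]; ring
  -- splitting over squares and nonsquares
  have hdisj : Disjoint S (S.image (fun x => -x)) := by
    rw [Finset.disjoint_left]
    intro x hxS hxN
    obtain ⟨y, hyS, hyx⟩ := Finset.mem_image.mp hxN
    obtain ⟨a, ha0, ha⟩ := (hmemS x).mp hxS
    obtain ⟨b, hb0, hb⟩ := (hmemS y).mp hyS
    have hsq : IsSquare (-1 : F) := by
      refine ⟨b / a, ?_⟩
      field_simp
      linear_combination -hb - ha + hyx
    exact (FiniteField.isSquare_neg_one_iff.mp hsq) hq2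
  have hsplit : ∑ x : F, g x = 2 * ∑ u ∈ S, g u := by
    rw [← Finset.sum_subset (Finset.subset_univ (S ∪ S.image (fun x => -x)))
      (fun x _ hx => ?_), Finset.sum_union hdisj,
      Finset.sum_image (fun x _ y _ h => neg_injective h)]
    · rw [two_mul]
      congr 1
      exact Finset.sum_congr rfl fun x _ => hgneg x
    · by_cases hx0 : x = 0
      · subst hx0
        simp only [hg, hφ, MulChar.map_zero, mul_zero]
      · exfalso
        rw [Finset.mem_union] at hx
        push_neg at hx
        exact hx.2 (Finset.mem_image.mpr ⟨-x, hns x hx0 hx.1, neg_neg x⟩)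
  have key : ∑ u ∈ S, g u = jacobiSum ψ φ := by
    have h2 : (2 : ℂ) ≠ 0 := two_ne_zero
    apply mul_left_cancel₀ h2
    rw [← hsplit, htot]
  -- main computation
  funext i
  have hsi0 : s i ≠ 0 := hS0 _ (hsiS i)
  simp only [Matrix.mulVec, dotProduct, Matrix.of_apply, Pi.smul_apply, smul_eq_mul]
  have hA : ∑ j, (ψ (1 + s j / s i) + ψ (1 - s j / s i)) * φ (s j)
      = ∑ x ∈ S, (ψ (1 + x / s i) + ψ (1 - x / s i)) * φ x := by
    refine Finset.sum_bij (fun j _ => s j) (fun j _ => hsiS j)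
      (fun a _ b _ h => hs h) (fun x hx => ?_) (fun j _ => rfl)
    obtain ⟨j, hj⟩ := (hsimg x).mpr ((hmemS x).mp hx)
    exact ⟨j, Finset.mem_univ j, hj⟩
  have hB : ∑ x ∈ S, (ψ (1 + x / s i) + ψ (1 - x / s i)) * φ x
      = ∑ u ∈ S, g u * φ (s i) := by
    refine Finset.sum_bij' (fun x _ => x / s i) (fun u _ => u * s i)
      (fun x hx => hSdiv x hx _ (hsiS i)) (fun u hu => hSmul u hu _ (hsiS i))
      (fun x _ => div_mul_cancel₀ x hsi0) (fun u _ => mul_div_cancel_right₀ u hsi0)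
      (fun x _ => ?_)
    simp only [hg]
    rw [mul_assoc, ← map_mul, div_mul_cancel₀ x hsi0]
  rw [hA, hB, ← Finset.sum_mul, key, mul_comm]
end

section
/- Let q ≡ 3 (mod 4) be an odd prime power, χ a generator of the character group of F_q^×, 1 ≤ r ≤ q-2, and let s_1, ..., s_{(q-1)/2} be the nonzero squares of F_q. For every odd integer k with 1 ≤ k ≤ (q-1)/2, the column vector v_k = (χ^k(s_1), ..., χ^k(s_{(q-1)/2}))^T is an eigenvector of the matrix M = [χ^r(1 + s_j/s_i) + χ^r(1 - s_j/s_i)]_{1≤i,j≤(q-1)/2} with eigenvalue J_q(χ^r, χ^{k+(q-1)/2}). -/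
private lemma order_of_gen {F : Type*} [Field F] [Fintype F] (χ : MulChar F ℂ)
    (hχ : ∀ ψ : MulChar F ℂ, ψ ∈ Subgroup.zpowers χ) :
    orderOf χ = Fintype.card F - 1 := by
  classical
  have hcard : (Fintype.card F - 1) ≠ 0 := by
    have := Fintype.one_lt_card (α := F); omega
  obtain ⟨ψ, hψ⟩ := MulChar.exists_mulChar_orderOf F dvd_rfl
      (Complex.isPrimitiveRoot_exp _ hcard)
  obtain ⟨z, hz⟩ := Subgroup.mem_zpowers_iff.mp (hχ ψ)
  have h1 : ψ ^ orderOf χ = 1 := by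
    rw [← hz, ← zpow_natCast, ← zpow_mul, mul_comm, zpow_mul, zpow_natCast,
      pow_orderOf_eq_one, one_zpow]
  exact Nat.dvd_antisymm (MulChar.orderOf_dvd_card_sub_one F χ)
    (hψ ▸ orderOf_dvd_of_pow_eq_one h1)

open scoped Classical in
private lemma eta_spec {F : Type*} [Field F] [Fintype F] {q : ℕ} (hcard : Fintype.card F = q)
    (hq3 : q % 4 = 3) (χ : MulChar F ℂ) (hord : orderOf χ = q - 1) :
    (∀ x : F, x ≠ 0 → (χ ^ ((q - 1) / 2)) x = if IsSquare x then 1 else -1) ∧ χ (-1) = -1 := by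
  classical
  have hq5 : 3 ≤ q := by omega
  obtain ⟨g, hg⟩ := IsCyclic.exists_generator (α := Fˣ)
  have hog : orderOf g = q - 1 := by
    rw [orderOf_eq_card_of_forall_mem_zpowers hg, Nat.card_eq_fintype_card,
      Fintype.card_units, hcard]
  have hpow1 : ∀ j : ℕ, χ ^ j = 1 ↔ (q - 1) ∣ j := by
    intro j
    rw [← hord, ← orderOf_dvd_iff_pow_eq_one]
  have hη2 : (χ ^ ((q - 1) / 2)) ^ 2 = 1 := by
    rw [← pow_mul, show (q - 1) / 2 * 2 = q - 1 by omega, ← hord]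
    exact pow_orderOf_eq_one χ
  have hηne : χ ^ ((q - 1) / 2) ≠ 1 := by
    intro h
    have h2 := (hpow1 _).mp h
    have := Nat.le_of_dvd (by omega) h2
    omega
  have hηg : (χ ^ ((q - 1) / 2)) ((g : Fˣ) : F) = -1 := by
    have h2 : (χ ^ ((q - 1) / 2)) ((g : Fˣ) : F) * (χ ^ ((q - 1) / 2)) ((g : Fˣ) : F) = 1 := by
      have := congrArg (fun ψ : MulChar F ℂ => ψ ((g : Fˣ) : F)) hη2
      simpa [pow_two, MulChar.mul_apply] using this
    rcases mul_self_eq_one_iff.mp h2 with h | h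
    · exfalso
      exact hηne ((MulChar.eq_iff hg _ 1).mpr (by rw [h, MulChar.one_apply_coe]))
    · exact h
  have main : ∀ x : F, x ≠ 0 → (χ ^ ((q - 1) / 2)) x = if IsSquare x then 1 else -1 := by
    intro x hx
    obtain ⟨t, ht⟩ := Submonoid.mem_powers_iff _ _ |>.mp
      (mem_powers_iff_mem_zpowers.mpr (hg (Units.mk0 x hx)))
    have hxt : x = ((g : Fˣ) : F) ^ t := by
      rw [← Units.val_pow_eq_pow_val, ht, Units.val_mk0]
    have hηx : (χ ^ ((q - 1) / 2)) x = (-1 : ℂ) ^ t := by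
      rw [hxt, map_pow, hηg]
    have hsq : IsSquare x ↔ Even t := by
      constructor
      · rintro ⟨y, hy⟩
        have hy0 : y ≠ 0 := by
          rintro rfl; exact hx (by simp [hy])
        obtain ⟨c, hc⟩ := Submonoid.mem_powers_iff _ _ |>.mp
          (mem_powers_iff_mem_zpowers.mpr (hg (Units.mk0 y hy0)))
        have hyc : y = ((g : Fˣ) : F) ^ c := by
          rw [← Units.val_pow_eq_pow_val, hc, Units.val_mk0]
        have hgt : g ^ t = g ^ (2 * c) := by
          apply Units.ext
          rw [Units.val_pow_eq_pow_val, Units.val_pow_eq_pow_val, ← hxt]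
          rw [hy, hyc, ← pow_add, two_mul]
        have hmod := pow_eq_pow_iff_modEq.mp hgt
        rw [hog] at hmod
        have h2 : t % 2 = (2 * c) % 2 := Nat.ModEq.of_dvd ⟨(q - 1) / 2, by omega⟩ hmod
        exact Nat.even_iff.mpr (by omega)
      · rintro ⟨c, rfl⟩
        exact ⟨((g : Fˣ) : F) ^ c, by rw [hxt, ← pow_add]⟩
    rcases Nat.even_or_odd t with he | ho
    · rw [hηx, he.neg_one_pow, if_pos (hsq.mpr he)]
    · rw [hηx, ho.neg_one_pow, if_neg (fun h => (Nat.not_even_iff_odd.mpr ho) (hsq.mp h))]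
  refine ⟨main, ?_⟩
  have hne : (-1 : F) ≠ 0 := by
    simp
  have hns : ¬ IsSquare (-1 : F) := by
    rw [FiniteField.isSquare_neg_one_iff, hcard]
    omega
  have hη1 : (χ ^ ((q - 1) / 2)) (-1 : F) = -1 := by rw [main _ hne, if_neg hns]
  have h1 : χ (-1 : F) * χ (-1 : F) = 1 := by
    rw [← map_mul]; norm_num
  rcases mul_self_eq_one_iff.mp h1 with h | h
  · exfalso
    rw [MulChar.pow_apply' _ (by omega : (q - 1) / 2 ≠ 0), h, one_pow] at hη1
    norm_num at hη1
  · exact h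


/-- For `q ≡ 3 (mod 4)`, `χ` a generator, `1 ≤ r ≤ q-2`, and `k` odd with
`1 ≤ k ≤ (q-1)/2`, the vector `(χ^k(s_1),…,χ^k(s_{(q-1)/2}))` is an eigenvector of
`M = [χ^r(1 + s_j/s_i) + χ^r(1 - s_j/s_i)]` with eigenvalue `J_q(χ^r, χ^{k+(q-1)/2})`. -/
theorem eigenvector_odd_k (p n q : ℕ) [Fact p.Prime] (hn : 0 < n) (hq : q = p ^ n)
    (hq3 : q % 4 = 3)
    (F : Type*) [Field F] [Fintype F] (hcard : Fintype.card F = q)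
    (χ : MulChar F ℂ) (hχ : ∀ ψ : MulChar F ℂ, ψ ∈ Subgroup.zpowers χ)
    (r : ℕ) (hr1 : 1 ≤ r) (hr2 : r ≤ q - 2)
    (s : Fin ((q - 1) / 2) → F) (hs : Function.Injective s)
    (hsimg : ∀ x : F, (∃ i, s i = x) ↔ ∃ y : F, y ≠ 0 ∧ y ^ 2 = x)
    (k : ℕ) (hk1 : 1 ≤ k) (hk2 : k ≤ (q - 1) / 2) (hkodd : Odd k) :
    (Matrix.of fun i j => (χ ^ r) (1 + s j / s i) + (χ ^ r) (1 - s j / s i)).mulVec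
        (fun i => (χ ^ k) (s i))
      = jacobiSum (χ ^ r) (χ ^ (k + (q - 1) / 2)) • (fun i => (χ ^ k) (s i)) := by
  classical
  have hord := order_of_gen χ hχ
  rw [hcard] at hord
  obtain ⟨hηval, hχneg⟩ := eta_spec hcard hq3 χ hord
  have hq5 : 3 ≤ q := by omega
  have hmodd : Odd ((q - 1) / 2) := ⟨(q - 3) / 4, by omega⟩
  have hs0 : ∀ i, s i ≠ 0 := by
    intro i
    obtain ⟨y, hy0, hy⟩ := (hsimg (s i)).mp ⟨i, rfl⟩
    rw [← hy]; exact pow_ne_zero _ hy0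
  have hk_neg : (χ ^ k) (-1 : F) = -1 := by
    rw [MulChar.pow_apply' _ (by omega) _, hχneg, hkodd.neg_one_pow]
  have hkm_neg : (χ ^ (k + (q - 1) / 2)) (-1 : F) = 1 := by
    rw [MulChar.pow_apply' _ (by omega) _, hχneg, (hkodd.add_odd hmodd).neg_one_pow]
  -- the change-of-variable lemma for sums over F
  have hBgen : ∀ (c : ℂ) (K : ℕ), (χ ^ K) (-1 : F) = c →
      ∑ x : F, (χ ^ r) (1 - x) * (χ ^ K) x = c * ∑ x : F, (χ ^ r) (1 + x) * (χ ^ K) x := by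
    intro c K hc
    rw [Finset.mul_sum]
    refine (Fintype.sum_equiv (Equiv.neg F) _ _ (fun x => ?_)).symm
    simp only [Equiv.neg_apply]
    rw [show (1 : F) - -x = 1 + x by ring, show (-x : F) = -1 * x by ring, map_mul, hc]
    ring
  -- the Jacobi sum identity
  have hC : ∑ x : F, (χ ^ r) (1 + x) * (χ ^ (k + (q - 1) / 2)) x
      = jacobiSum (χ ^ r) (χ ^ (k + (q - 1) / 2)) := by
    show _ = ∑ x : F, (χ ^ r) x * (χ ^ (k + (q - 1) / 2)) (1 - x)
    refine Fintype.sum_equiv (Equiv.addLeft (1 : F)) _ _ (fun x => ?_)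
    simp only [Equiv.coe_addLeft]
    rw [show (1 : F) - (1 + x) = -1 * x by ring, map_mul, hkm_neg, one_mul]
  -- η on nonzero squares is 1
  have hηsq : ∀ j, (χ ^ ((q - 1) / 2)) (s j) = 1 := by
    intro j
    obtain ⟨y, hy0, hy⟩ := (hsimg (s j)).mp ⟨j, rfl⟩
    rw [hηval _ (hs0 j), if_pos ⟨y, by rw [← hy]; ring⟩]
  -- doubling identity
  have key : ∀ f : F → ℂ, f 0 = 0 →
      (2 : ℂ) * ∑ j, f (s j) = ∑ x : F, f x * (1 + (χ ^ ((q - 1) / 2)) x) := by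
    intro f hf0
    have h1 : ∑ j, f (s j) = ∑ x ∈ Finset.univ.image s, f x :=
      (Finset.sum_image (fun a _ b _ h => hs h)).symm
    rw [h1, Finset.mul_sum]
    rw [← Finset.sum_subset (Finset.subset_univ (Finset.univ.image s)) ?_]
    · refine Finset.sum_congr rfl (fun x hx => ?_)
      obtain ⟨j, _, rfl⟩ := Finset.mem_image.mp hx
      rw [hηsq j]; ring
    · intro x _ hx
      have hnx : ¬ ∃ y : F, y ≠ 0 ∧ y ^ 2 = x := by
        rw [← hsimg]
        intro ⟨j, hj⟩
        exact hx (Finset.mem_image.mpr ⟨j, Finset.mem_univ j, hj⟩)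
      by_cases hx0 : x = 0
      · rw [hx0, hf0, zero_mul]
      · have hns : ¬ IsSquare x := by
          rintro ⟨y, rfl⟩
          exact hnx ⟨y, fun h => hx0 (by rw [h]; ring), sq y⟩
        rw [hηval x hx0, if_neg hns]
        ring
  funext i
  simp only [Matrix.mulVec, dotProduct, Matrix.of_apply, Pi.smul_apply, smul_eq_mul]
  -- reindexing bijection
  have hexists : ∀ j, ∃ j', s j' = s j * s i := by
    intro j
    obtain ⟨y, hy0, hy⟩ := (hsimg (s j)).mp ⟨j, rfl⟩
    obtain ⟨z, hz0, hz⟩ := (hsimg (s i)).mp ⟨i, rfl⟩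
    exact (hsimg (s j * s i)).mpr ⟨y * z, mul_ne_zero hy0 hz0, by rw [mul_pow, hy, hz]⟩
  choose t ht using hexists
  have htinj : Function.Injective t := by
    intro a b hab
    apply hs
    have h2 : s (t a) = s (t b) := congrArg s hab
    rw [ht, ht] at h2
    exact mul_right_cancel₀ (hs0 i) h2
  have hstep1 : ∑ j, ((χ ^ r) (1 + s j / s i) + (χ ^ r) (1 - s j / s i)) * (χ ^ k) (s j)
      = (∑ j, ((χ ^ r) (1 + s j) + (χ ^ r) (1 - s j)) * (χ ^ k) (s j)) * (χ ^ k) (s i) := by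
    rw [Finset.sum_mul]
    refine (Fintype.sum_bijective t (Finite.injective_iff_bijective.mp htinj) _ _
      (fun j => ?_)).symm
    rw [ht, mul_div_cancel_right₀ _ (hs0 i), map_mul, mul_assoc]
  rw [hstep1]
  congr 1
  -- it remains to evaluate the half sum
  have h2S := key (fun x => ((χ ^ r) (1 + x) + (χ ^ r) (1 - x)) * (χ ^ k) x)
    (by simp [MulChar.map_zero])
  have hexp : ∑ x : F, ((χ ^ r) (1 + x) + (χ ^ r) (1 - x)) * (χ ^ k) x
        * (1 + (χ ^ ((q - 1) / 2)) x)
      = (∑ x : F, (χ ^ r) (1 + x) * (χ ^ k) x + ∑ x : F, (χ ^ r) (1 - x) * (χ ^ k) x)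
        + (∑ x : F, (χ ^ r) (1 + x) * (χ ^ (k + (q - 1) / 2)) x
          + ∑ x : F, (χ ^ r) (1 - x) * (χ ^ (k + (q - 1) / 2)) x) := by
    rw [← Finset.sum_add_distrib, ← Finset.sum_add_distrib, ← Finset.sum_add_distrib]
    refine Finset.sum_congr rfl (fun x _ => ?_)
    have hx : (χ ^ (k + (q - 1) / 2)) x = (χ ^ k) x * (χ ^ ((q - 1) / 2)) x := by
      rw [pow_add, MulChar.mul_apply]
    rw [hx]; ring
  rw [hexp, hBgen (-1) k hk_neg, hBgen 1 (k + (q - 1) / 2) hkm_neg, hC] at h2S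
  have h2S' : (2 : ℂ) * ∑ j, ((χ ^ r) (1 + s j) + (χ ^ r) (1 - s j)) * (χ ^ k) (s j)
      = 2 * jacobiSum (χ ^ r) (χ ^ (k + (q - 1) / 2)) := by
    rw [h2S]; ring
  have := mul_left_cancel₀ (two_ne_zero (α := ℂ)) h2S'
  exact this
end

section
/- Let q ≡ 5 (mod 8) be a prime power, χ a generator of the character group of F_q^×, 1 ≤ r ≤ q-2, and let b_1, ..., b_{(q-1)/4} be the nonzero fourth powers of F_q. For every even integer k with 1 ≤ k ≤ (q-1)/4, the vector u_k = (χ^k(b_1), ..., χ^k(b_{(q-1)/4}))^T is an eigenvector of N = [χ^r(1 + b_j/b_i) + χ^r(1 - b_j/b_i)]_{1≤i,j≤(q-1)/4} with eigenvalue (1/2)·(J_q(χ^r, χ^k) + J_q(χ^r, φχ^k)), where φ = χ^{(q-1)/2} is the quadratic character. -/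
set_option maxHeartbeats 1000000


/-- For `q ≡ 5 (mod 8)`, `χ` a generator, `1 ≤ r ≤ q-2`, and even `k` with
`1 ≤ k ≤ (q-1)/4`, the vector `(χ^k(b_1),…,χ^k(b_{(q-1)/4}))` (the `b_i` being the nonzero
fourth powers) is an eigenvector of `N = [χ^r(1 + b_j/b_i) + χ^r(1 - b_j/b_i)]` with
eigenvalue `(1/2)(J_q(χ^r, χ^k) + J_q(χ^r, φχ^k))`, where `φ = χ^{(q-1)/2}`. -/
theorem eigenvector_fourth_powers_even_k (p n q : ℕ) [Fact p.Prime] (hn : 0 < n)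
    (hq : q = p ^ n) (hq5 : q % 8 = 5)
    (F : Type*) [Field F] [Fintype F] (hcard : Fintype.card F = q)
    (χ : MulChar F ℂ) (hχ : ∀ ψ : MulChar F ℂ, ψ ∈ Subgroup.zpowers χ)
    (r : ℕ) (hr1 : 1 ≤ r) (hr2 : r ≤ q - 2)
    (b : Fin ((q - 1) / 4) → F) (hb : Function.Injective b)
    (hbimg : ∀ x : F, (∃ i, b i = x) ↔ ∃ y : F, y ≠ 0 ∧ y ^ 4 = x)
    (k : ℕ) (hk1 : 1 ≤ k) (hk2 : k ≤ (q - 1) / 4) (hkeven : Even k) :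
    (Matrix.of fun i j => (χ ^ r) (1 + b j / b i) + (χ ^ r) (1 - b j / b i)).mulVec
        (fun i => (χ ^ k) (b i))
      = ((1 / 2 : ℂ) * (jacobiSum (χ ^ r) (χ ^ k)
            + jacobiSum (χ ^ r) (χ ^ ((q - 1) / 2) * χ ^ k)))
          • (fun i => (χ ^ k) (b i)) := by
  classical
  -- numerology
  have hq5' : 5 ≤ q := hq5 ▸ Nat.mod_le q 8
  have h8 : ¬ (8 ∣ q - 1) := by omega
  have hhne : (q - 1) / 2 ≠ 0 := by omega
  have hkne : k ≠ 0 := by omega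
  have hrne : r ≠ 0 := by omega
  have hqodd : q % 2 = 1 := by omega
  -- -1 ≠ 1 in F
  have hchar2 : ringChar F ≠ 2 := by
    intro h
    have := (FiniteField.even_card_iff_char_two (F := F)).mp h
    omega
  have hne11 : (-1 : F) ≠ 1 := Ring.neg_one_ne_one_of_char_ne_two hchar2
  -- the order of χ is q - 1
  have hcu : Fintype.card Fˣ = q - 1 := by rw [Fintype.card_units, hcard]
  have hcune : Fintype.card Fˣ ≠ 0 := Fintype.card_ne_zero
  obtain ⟨ψ, hψ⟩ := MulChar.exists_mulChar_orderOf_eq_card_units F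
    (Complex.isPrimitiveRoot_exp _ hcune)
  have hχord : orderOf χ = q - 1 := by
    refine Nat.dvd_antisymm ?_ ?_
    · have := MulChar.orderOf_dvd_card_sub_one F χ
      rwa [hcard] at this
    · rw [← hcu, ← hψ]
      exact orderOf_dvd_of_mem_zpowers (hχ ψ)
  -- a generator of Fˣ
  obtain ⟨g, hg⟩ := IsCyclic.exists_generator (α := Fˣ)
  have hgord : orderOf g = q - 1 := by
    rw [orderOf_eq_card_of_forall_mem_zpowers hg, Nat.card_eq_fintype_card, hcu]
  have hgne : (g : F) ≠ 0 := Units.ne_zero g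
  -- order of χ g is q - 1
  have hχg : ∀ d : ℕ, χ ^ d = 1 ↔ (χ (g : F)) ^ d = 1 := by
    intro d
    constructor
    · intro h
      have := congrArg (fun ξ : MulChar F ℂ => ξ (g : F)) h
      simpa [MulChar.pow_apply_coe, MulChar.one_apply_coe] using this
    · intro h
      ext a
      obtain ⟨m, hm⟩ := ((isOfFinOrder_of_finite g).mem_powers_iff_mem_zpowers).mpr (hg a)
      dsimp only at hm
      rw [← hm, MulChar.pow_apply_coe, MulChar.one_apply_coe, Units.val_pow_eq_pow_val,
        map_pow, ← pow_mul, mul_comm m d, pow_mul, h, one_pow]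
  have hχgord : orderOf (χ (g : F)) = q - 1 := by
    rw [← hχord]
    refine Nat.dvd_antisymm ?_ ?_
    · exact orderOf_dvd_of_pow_eq_one ((hχg (orderOf χ)).mp (pow_orderOf_eq_one χ))
    · exact orderOf_dvd_of_pow_eq_one ((hχg (orderOf (χ (g : F)))).mpr
        (pow_orderOf_eq_one _))
  -- fourth power predicate
  set P : F → Prop := fun x => ∃ y : F, y ≠ 0 ∧ y ^ 4 = x with hP
  have hPne : ∀ x, P x → x ≠ 0 := by
    rintro x ⟨y, hy0, rfl⟩
    exact pow_ne_zero 4 hy0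
  have hPdiv : ∀ x z, P x → P z → P (x / z) := by
    rintro _ _ ⟨y, hy0, rfl⟩ ⟨w, hw0, rfl⟩
    exact ⟨y / w, div_ne_zero hy0 hw0, by rw [div_pow]⟩
  have hPmul : ∀ x z, P x → P z → P (x * z) := by
    rintro _ _ ⟨y, hy0, rfl⟩ ⟨w, hw0, rfl⟩
    exact ⟨y * w, mul_ne_zero hy0 hw0, by rw [mul_pow]⟩
  -- -1 is not a fourth power
  have hPneg1 : ¬ P (-1) := by
    rintro ⟨y, hy0, hy4⟩
    have hy8 : y ^ 8 = 1 := by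
      have : y ^ 8 = (y ^ 4) ^ 2 := by ring
      rw [this, hy4]; ring
    have hyq : y ^ (q - 1) = 1 := by
      rw [← hcard]; exact FiniteField.pow_card_sub_one_eq_one y hy0
    have hd8 : orderOf y ∣ 8 := orderOf_dvd_of_pow_eq_one hy8
    have hdq : orderOf y ∣ q - 1 := orderOf_dvd_of_pow_eq_one hyq
    have hy4ne : y ^ 4 ≠ 1 := by rw [hy4]; exact hne11
    have hd4 : ¬ (orderOf y ∣ 4) := fun h => hy4ne (orderOf_dvd_iff_pow_eq_one.mp h)
    have hle : orderOf y < 9 := Nat.lt_succ_of_le (Nat.le_of_dvd (by norm_num) hd8)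
    have hcases : ∀ d, d < 9 → d ∣ 8 → d = 1 ∨ d = 2 ∨ d = 4 ∨ d = 8 := by decide
    have h4or8 : orderOf y ∣ 4 ∨ orderOf y = 8 := by
      rcases hcases _ hle hd8 with h | h | h | h <;> rw [h] <;> norm_num
    rcases h4or8 with h | h
    · exact hd4 h
    · rw [h] at hdq; exact h8 hdq
  -- χ^((q-1)/2) evaluates to 1 on fourth powers
  have hyq1 : ∀ y : F, y ≠ 0 → χ y ^ (q - 1) = 1 := by
    intro y hy0
    rw [← map_pow, ← hcard, FiniteField.pow_card_sub_one_eq_one y hy0, map_one]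
  have hφ4 : ∀ y : F, y ≠ 0 → (χ ^ ((q - 1) / 2)) (y ^ 4) = 1 := by
    intro y hy0
    rw [MulChar.pow_apply' χ hhne, map_pow, ← pow_mul]
    have h4 : 4 * ((q - 1) / 2) = (q - 1) * 2 := by omega
    rw [h4, pow_mul, hyq1 y hy0, one_pow]
  -- χ(-1) = ±1 and consequences
  have hχm1 : χ (-1) = 1 ∨ χ (-1) = -1 := by
    have : χ (-1) * χ (-1) = 1 := by
      rw [← map_mul]; norm_num
    exact mul_self_eq_one_iff.mp this
  have hφm1 : (χ ^ ((q - 1) / 2)) (-1) = 1 := by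
    rw [MulChar.pow_apply' χ hhne]
    have heven : Even ((q - 1) / 2) := by rw [Nat.even_iff]; omega
    rcases hχm1 with h | h
    · rw [h, one_pow]
    · rw [h, heven.neg_one_pow]
  have hBm1 : (χ ^ k) (-1) = 1 := by
    rw [MulChar.pow_apply' χ hkne]
    rcases hχm1 with h | h
    · rw [h, one_pow]
    · rw [h, hkeven.neg_one_pow]
  -- easy direction: P u or P (-u) implies φ u = 1
  have hφeasy : ∀ u : F, P u ∨ P (-u) → (χ ^ ((q - 1) / 2)) u = 1 := by
    rintro u (⟨y, hy0, rfl⟩ | ⟨y, hy0, hy4⟩)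
    · exact hφ4 y hy0
    · have : u = -1 * y ^ 4 := by rw [hy4]; ring
      rw [this, map_mul, hφm1, one_mul]
      exact hφ4 y hy0
  -- hard direction: u ≠ 0 and φ u = 1 implies P u or P (-u)
  have hφhard : ∀ u : F, u ≠ 0 → (χ ^ ((q - 1) / 2)) u = 1 → P u ∨ P (-u) := by
    intro u hu0 hφu
    obtain ⟨m, hm⟩ := ((isOfFinOrder_of_finite g).mem_powers_iff_mem_zpowers).mpr (hg (Units.mk0 u hu0))
    dsimp only at hm
    have hum : u = (g : F) ^ m := by
      rw [← Units.val_pow_eq_pow_val, hm, Units.val_mk0]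
    have h1 : χ (g : F) ^ (m * ((q - 1) / 2)) = 1 := by
      rw [pow_mul, ← map_pow, ← hum]
      rw [MulChar.pow_apply' χ hhne] at hφu
      exact hφu
    have h2 : (q - 1) ∣ m * ((q - 1) / 2) := by
      have h2' := orderOf_dvd_of_pow_eq_one h1
      rwa [hχgord] at h2'
    obtain ⟨c, hc⟩ := h2
    have hm2 : 2 ∣ m := by
      set h2' := (q - 1) / 2 with hh2
      have hq2 : q - 1 = 2 * h2' := by omega
      rw [hq2] at hc
      refine ⟨c, Nat.eq_of_mul_eq_mul_right (by omega : 0 < h2') ?_⟩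
      rw [hc]; ring
    rcases Nat.even_or_odd (m / 2) with h | h
    · -- 4 ∣ m
      left
      have h4 : m = 4 * (m / 4) := by
        rcases h with ⟨c', hc'⟩; omega
      refine ⟨(g : F) ^ (m / 4), pow_ne_zero _ hgne, ?_⟩
      rw [← pow_mul, hum]
      congr 1
      omega
    · -- m ≡ 2 mod 4
      right
      -- -1 = g ^ ((q-1)/2)
      have hg1 : (g : F) ^ (q - 1) = 1 := by
        rw [← hcard]; exact FiniteField.pow_card_sub_one_eq_one _ hgne
      have hgm1 : (g : F) ^ ((q - 1) / 2) = -1 := by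
        have hsq : (g : F) ^ ((q - 1) / 2) * (g : F) ^ ((q - 1) / 2) = 1 := by
          rw [← pow_add]
          have : (q - 1) / 2 + (q - 1) / 2 = q - 1 := by omega
          rw [this, hg1]
        rcases mul_self_eq_one_iff.mp hsq with h' | h'
        · exfalso
          have : g ^ ((q - 1) / 2) = 1 := by
            ext; rw [Units.val_pow_eq_pow_val, h', Units.val_one]
          have := orderOf_dvd_of_pow_eq_one this
          rw [hgord] at this
          have := Nat.le_of_dvd (by omega) this
          omega
        · exact h'
      have hneg : -u = (g : F) ^ ((q - 1) / 2 + m) := by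
        rw [pow_add, hgm1, hum]; ring
      have h4 : (q - 1) / 2 + m = 4 * (((q - 1) / 2 + m) / 4) := by
        rcases h with ⟨c', hc'⟩
        omega
      refine ⟨(g : F) ^ (((q - 1) / 2 + m) / 4), pow_ne_zero _ hgne, ?_⟩
      rw [← pow_mul, hneg]
      congr 1
      omega
  -- the finsets of fourth powers and their negatives
  set Q4 : Finset F := Finset.univ.image b with hQ4
  have hQ4mem : ∀ x : F, x ∈ Q4 ↔ P x := by
    intro x
    rw [hQ4, Finset.mem_image]
    constructor
    · rintro ⟨i, -, rfl⟩
      exact (hbimg (b i)).mp ⟨i, rfl⟩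
    · intro hx
      obtain ⟨i, hi⟩ := (hbimg x).mpr hx
      exact ⟨i, Finset.mem_univ i, hi⟩
  set Q4n : Finset F := Q4.image (fun t => -t) with hQ4n
  have hQ4nmem : ∀ x : F, x ∈ Q4n ↔ P (-x) := by
    intro x
    rw [hQ4n, Finset.mem_image]
    constructor
    · rintro ⟨t, ht, rfl⟩
      rw [neg_neg]
      exact (hQ4mem t).mp ht
    · intro hx
      exact ⟨-x, (hQ4mem (-x)).mpr hx, neg_neg x⟩
  have hdisj : Disjoint Q4 Q4n := by
    rw [Finset.disjoint_left]
    intro x hx hxn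
    have h1 : P x := (hQ4mem x).mp hx
    have h2 : P (-x) := (hQ4nmem x).mp hxn
    have : P (-x / x) := hPdiv _ _ h2 h1
    rw [neg_div, div_self (hPne x h1)] at this
    exact hPneg1 this
  -- abbreviations
  set A : MulChar F ℂ := χ ^ r with hA
  set B : MulChar F ℂ := χ ^ k with hB
  set Φ : MulChar F ℂ := χ ^ ((q - 1) / 2) with hΦ
  have hBneg : ∀ t : F, B (-t) = B t := by
    intro t
    rw [show (-t : F) = -1 * t by ring, map_mul, hB, hBm1, one_mul]
  -- the key sum identity
  have hkey : ∑ t ∈ Q4, (A (1 + t) + A (1 - t)) * B t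
      = (1 / 2 : ℂ) * (jacobiSum A B + jacobiSum A (Φ * B)) := by
    have hsplit : ∑ t ∈ Q4, (A (1 + t) + A (1 - t)) * B t
        = ∑ t ∈ Q4, A (1 + t) * B t + ∑ t ∈ Q4n, A (1 + t) * B t := by
      have h2 : ∑ t ∈ Q4n, A (1 + t) * B t = ∑ t ∈ Q4, A (1 - t) * B t := by
        rw [hQ4n, Finset.sum_image (fun x _ y _ h => neg_injective h)]
        apply Finset.sum_congr rfl
        intro t _
        rw [hBneg t, show (1 + -t : F) = 1 - t by ring]
      rw [h2, ← Finset.sum_add_distrib]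
      apply Finset.sum_congr rfl
      intro t _
      ring
    have hunion : ∑ t ∈ Q4, A (1 + t) * B t + ∑ t ∈ Q4n, A (1 + t) * B t
        = ∑ t ∈ Q4 ∪ Q4n, A (1 + t) * B t := (Finset.sum_union hdisj).symm
    rw [hsplit, hunion]
    -- extend to the full sum
    have hext : ∑ t ∈ Q4 ∪ Q4n, A (1 + t) * B t
        = ∑ t : F, (1 / 2 : ℂ) * (A (1 + t) * (B t + (Φ * B) t)) := by
      have hcongr : ∑ t ∈ Q4 ∪ Q4n, A (1 + t) * B t
          = ∑ t ∈ Q4 ∪ Q4n, (1 / 2 : ℂ) * (A (1 + t) * (B t + (Φ * B) t)) := by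
        apply Finset.sum_congr rfl
        intro t ht
        have hPt : P t ∨ P (-t) := by
          rcases Finset.mem_union.mp ht with h | h
          · exact Or.inl ((hQ4mem t).mp h)
          · exact Or.inr ((hQ4nmem t).mp h)
        have hφt : Φ t = 1 := hφeasy t hPt
        rw [MulChar.mul_apply, hφt, one_mul]
        ring
      rw [hcongr]
      apply Finset.sum_subset (Finset.subset_univ _)
      intro t _ ht
      by_cases ht0 : t = 0
      · subst ht0
        rw [MulChar.map_nonunit B (by simp), MulChar.map_nonunit (Φ * B) (by simp)]
        ring
      · have hφt : Φ t = 1 ∨ Φ t = -1 := by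
          apply mul_self_eq_one_iff.mp
          rw [hΦ, MulChar.pow_apply' χ hhne, ← pow_add]
          have hqq : (q - 1) / 2 + (q - 1) / 2 = q - 1 := by omega
          rw [hqq]
          exact hyq1 t ht0
        rcases hφt with h | h
        · exact absurd (Finset.mem_union.mpr <| (hφhard t ht0 h).imp
            (fun h' => (hQ4mem t).mpr h') (fun h' => (hQ4nmem t).mpr h')) ht
        · rw [MulChar.mul_apply, h]
          ring
    rw [hext]
    -- identify with Jacobi sums
    have hsum1 : ∑ t : F, A (1 + t) * B t = jacobiSum A B := by
      simp only [jacobiSum]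
      refine Fintype.sum_equiv (Equiv.addLeft (1 : F)) _ _ fun t => ?_
      simp only [Equiv.coe_addLeft]
      rw [show (1 - (1 + t) : F) = -t by ring, hBneg t]
    have hCneg : ∀ t : F, (Φ * B) (-t) = (Φ * B) t := by
      intro t
      rw [show (-t : F) = -1 * t by ring, map_mul, MulChar.mul_apply, hφm1, hBm1]
      simp
    have hsum2 : ∑ t : F, A (1 + t) * (Φ * B) t = jacobiSum A (Φ * B) := by
      simp only [jacobiSum]
      refine Fintype.sum_equiv (Equiv.addLeft (1 : F)) _ _ fun t => ?_
      simp only [Equiv.coe_addLeft]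
      rw [show (1 - (1 + t) : F) = -t by ring, hCneg t]
    rw [← hsum1, ← hsum2, ← Finset.sum_add_distrib, Finset.mul_sum]
    apply Finset.sum_congr rfl
    intro t _
    ring
  -- now the main computation
  funext i
  have hbi : P (b i) := (hbimg (b i)).mp ⟨i, rfl⟩
  have hbine : b i ≠ 0 := hPne _ hbi
  rw [Matrix.mulVec, Pi.smul_apply, smul_eq_mul]
  show ∑ j, (A (1 + b j / b i) + A (1 - b j / b i)) * B (b j) = _
  have hstep1 : ∑ j, (A (1 + b j / b i) + A (1 - b j / b i)) * B (b j)
      = ∑ x ∈ Q4, (A (1 + x / b i) + A (1 - x / b i)) * B x := by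
    rw [hQ4, Finset.sum_image (fun x _ y _ h => hb h)]
  have hstep2 : ∑ x ∈ Q4, (A (1 + x / b i) + A (1 - x / b i)) * B x
      = ∑ t ∈ Q4, (A (1 + t) + A (1 - t)) * (B (b i) * B t) := by
    refine Finset.sum_nbij' (fun x => x / b i) (fun t => t * b i) ?_ ?_ ?_ ?_ ?_
    · intro x hx
      exact (hQ4mem _).mpr (hPdiv _ _ ((hQ4mem x).mp hx) hbi)
    · intro t ht
      exact (hQ4mem _).mpr (hPmul _ _ ((hQ4mem t).mp ht) hbi)
    · intro x _
      exact div_mul_cancel₀ x hbine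
    · intro t _
      exact mul_div_cancel_right₀ t hbine
    · intro x _
      have hxx : B (b i) * B (x / b i) = B x := by
        rw [← map_mul, mul_comm, div_mul_cancel₀ x hbine]
      rw [hxx]
  rw [hstep1, hstep2]
  have hpull : ∑ t ∈ Q4, (A (1 + t) + A (1 - t)) * (B (b i) * B t)
      = B (b i) * ∑ t ∈ Q4, (A (1 + t) + A (1 - t)) * B t := by
    rw [Finset.mul_sum]
    apply Finset.sum_congr rfl
    intro t _
    ring
  rw [hpull, hkey]
  ring
end

section
/- Let q ≡ 5 (mod 8) be a prime power, χ a generator of the character group of F_q^×, 1 ≤ r ≤ q-2, and let b_1, ..., b_{(q-1)/4} be the nonzero fourth powers of F_q. Then det[χ^r(b_i + b_j) + χ^r(b_i - b_j)]_{1≤i,j≤(q-1)/4} = (1/2)^{(q-1)/4} · ∏_{k=0}^{(q-5)/4} (J_q(χ^r, χ^{2k}) + J_q(χ^r, φχ^{2k})), where φ is the quadratic character of F_q. -/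
/-! The matrix is `A * diagonal (χ^r (b j))` with `A i j = g (b i / b j)`,
`g x = χ^r (x + 1) + χ^r (x - 1)`. The nonzero fourth powers form the group `H` of `m`-th roots
of unity, `m = (q - 1) / 4`; as `m` is odd, `∏ b j = 1`, so the determinant is `det A`. This is a
group determinant of `H`, hence the product over the characters `ω` of `H` of
`∑_{h ∈ H} g h * ω h⁻¹`; take `ω` to be the restrictions of `χ^(r + 2k)`, `k < m`. The substitution
`h ↦ h⁻¹` turns that sum into `∑_{h ∈ H} (χ^r (1 + h) + χ^r (1 - h)) χ^(2k) h`, a sum of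
`χ^r (1 - y) χ^(2k) y` over the squares `y ∈ H ∪ -H`, and detecting squares by `(1 + φ y) / 2`
gives `(J(χ^r, χ^(2k)) + J(χ^r, φ χ^(2k))) / 2`. -/

open Finset

theorem Matrix.det_of_apply_div_eq_prod_sum {K G n : Type*} [Field K] [CommGroup G]
    [Fintype n] [DecidableEq n] (e : n ≃ G) (ω : n → G →* K) (hω : Function.Injective ω)
    (g : G → K) :
    (Matrix.of fun i j => g (e i / e j)).det = ∏ k, ∑ i, g (e i) * ω k (e i)⁻¹ := by
  set U : Matrix n n K := Matrix.of fun i k => ω k (e i)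
  -- the columns of `U` are eigenvectors of the matrix, independent by Dedekind's lemma
  have hU : IsUnit U := Matrix.linearIndependent_cols_iff_isUnit.mp <|
    ((linearIndependent_monoidHom G K).comp ω hω).map'
      (LinearEquiv.funCongrLeft K K e).toLinearMap (LinearEquiv.ker _)
  have hAU : Matrix.of (fun i j => g (e i / e j)) * U
      = U * Matrix.diagonal fun k => ∑ i, g (e i) * ω k (e i)⁻¹ := by
    ext i k
    rw [Matrix.mul_diagonal, Matrix.mul_apply, mul_sum]
    refine Fintype.sum_equiv (e.trans ((Equiv.divLeft (e i)).trans e.symm)) _ _ fun j => ?_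
    simp only [Matrix.of_apply, U, Equiv.trans_apply, Equiv.divLeft_apply,
      Equiv.apply_symm_apply, inv_div]
    rw [mul_left_comm, ← map_mul, mul_div_cancel]
  have := congrArg Matrix.det hAU
  rw [Matrix.det_mul, Matrix.det_mul, Matrix.det_diagonal, mul_comm U.det] at this
  exact mul_right_cancel₀ ((Matrix.isUnit_iff_isUnit_det U).mp hU).ne_zero this

theorem prod_univ_eq_one_of_odd_card {G : Type*} [CommGroup G] [Fintype G]
    (hG : Odd (Fintype.card G)) : ∏ g : G, g = 1 := by
  obtain ⟨t, ht⟩ := hG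
  have hinv : (∏ g : G, g)⁻¹ = ∏ g : G, g := by
    rw [← prod_inv_distrib]
    exact Fintype.prod_equiv (Equiv.inv G) _ _ fun _ => rfl
  have hsq : (∏ g : G, g) ^ 2 = 1 := by
    rw [sq]
    nth_rw 1 [← hinv]
    exact inv_mul_cancel _
  have := pow_card_eq_one (x := ∏ g : G, g)
  rwa [ht, pow_succ, pow_mul, hsq, one_pow, one_mul] at this

section rootsOfUnity

variable {R : Type*} [CommRing R] {m : ℕ} [NeZero m]

theorem exists_equiv_rootsOfUnity [IsDomain R] {b : Fin m → R} (hb : Function.Injective b)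
    (hb1 : ∀ i, b i ^ m = 1) :
    ∃ e : Fin m ≃ rootsOfUnity m R, (fun i => ((e i : Rˣ) : R)) = b := by
  set f : Fin m → rootsOfUnity m R := fun i => rootsOfUnity.mkOfPowEq (b i) (hb1 i)
  have hf : Function.Injective f := fun i j hij => hb <| by
    simpa only [f, rootsOfUnity.coe_mkOfPowEq] using
      congrArg (fun x : rootsOfUnity m R => ((x : Rˣ) : R)) hij
  have hbij := hf.bijective_of_nat_card_le (by simpa using card_rootsOfUnity R m)
  exact ⟨Equiv.ofBijective f hbij, funext fun i => rootsOfUnity.coe_mkOfPowEq _⟩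

theorem sum_equiv_rootsOfUnity_eq_sum_pow_eq_one {n M : Type*} [Fintype n] [Fintype R]
    [DecidableEq R] [AddCommMonoid M] (e : n ≃ rootsOfUnity m R) (f : R → M) :
    ∑ i, f ((e i : Rˣ) : R) = ∑ x with x ^ m = 1, f x := by
  refine sum_bij (fun i _ => ((e i : Rˣ) : R)) (fun i _ => ?_) (fun i _ j _ hij => ?_)
    (fun x hx => ?_) fun _ _ => rfl
  · simpa [← Units.val_pow_eq_pow_val] using (mem_rootsOfUnity m _).mp (e i).2
  · exact e.injective (Subtype.ext (Units.ext hij))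
  · have hx1 : x ^ m = 1 := (mem_filter.mp hx).2
    exact ⟨e.symm (rootsOfUnity.mkOfPowEq x hx1), mem_univ _, by simp⟩

end rootsOfUnity

section FiniteField

variable {F : Type*} [Field F] [Fintype F] {χ : MulChar F ℂ}

theorem sum_pow_eq_one_inv [DecidableEq F] {M : Type*} [AddCommMonoid M] (m : ℕ) (f : F → M) :
    ∑ x with x ^ m = 1, f x⁻¹ = ∑ x with x ^ m = 1, f x :=
  sum_equiv (Equiv.inv F) (fun x => by simp [inv_pow]) fun _ _ => rfl

theorem sum_pow_eq_one_add_neg [DecidableEq F] {M : Type*} [AddCommMonoid M] {m : ℕ}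
    (hm : Odd m) (h1 : (-1 : F) ≠ 1) (f : F → M) :
    ∑ x with x ^ m = 1, (f x + f (-x)) = ∑ x with x ^ (2 * m) = 1, f x := by
  have hneg : ∑ x with x ^ m = 1, f (-x) = ∑ x with (-x) ^ m = 1, f x :=
    sum_equiv (Equiv.neg F) (fun x => by simp) fun _ _ => rfl
  rw [sum_add_distrib, hneg, sum_filter, sum_filter, sum_filter, ← sum_add_distrib]
  refine sum_congr rfl fun x _ => ?_
  have hsq : x ^ (2 * m) = 1 ↔ x ^ m = 1 ∨ (-x) ^ m = 1 := by
    rw [hm.neg_pow, pow_mul', sq_eq_one_iff, neg_eq_iff_eq_neg]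
  have hdisj : ¬(x ^ m = 1 ∧ (-x) ^ m = 1) := fun ⟨hx, hx'⟩ =>
    h1 (by rwa [hm.neg_pow, hx] at hx')
  split_ifs <;> simp_all

namespace MulChar

theorem orderOf_eq_card_sub_one (hχ : ∀ ψ : MulChar F ℂ, ψ ∈ Subgroup.zpowers χ) :
    orderOf χ = Fintype.card F - 1 := by
  rw [orderOf_eq_card_of_forall_mem_zpowers hχ, card_eq_card_units_of_hasEnoughRootsOfUnity,
    Nat.card_units, Nat.card_eq_fintype_card]

theorem eq_one_of_apply_eq_one (hχ : ∀ ψ : MulChar F ℂ, ψ ∈ Subgroup.zpowers χ) {x : F}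
    (hx : χ x = 1) : x = 1 := by
  by_contra hx1
  obtain ⟨ψ, hψ⟩ := exists_apply_ne_one_of_hasEnoughRootsOfUnity F ℂ hx1
  obtain ⟨k, rfl⟩ := mem_powers_iff_mem_zpowers.mpr (hχ ψ)
  have hu : IsUnit x := isUnit_iff_ne_zero.mpr fun h0 => by simp [h0] at hx
  exact hψ (by rw [← hu.unit_spec, pow_apply_coe, hu.unit_spec, hx, one_pow])

theorem sum_range_pow_mul_apply [DecidableEq F]
    (hχ : ∀ ψ : MulChar F ℂ, ψ ∈ Subgroup.zpowers χ) {d m : ℕ}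
    (hdm : d * m = Fintype.card F - 1) (x : F) :
    ∑ s ∈ range d, (χ ^ (m * s)) x = if x ^ m = 1 then (d : ℂ) else 0 := by
  rcases eq_or_ne x 0 with rfl | hx
  · have hm : m ≠ 0 := by
      rintro rfl
      have := Fintype.one_lt_card (α := F)
      omega
    simp [zero_pow hm]
  set u := (isUnit_iff_ne_zero.mpr hx).unit
  have hux : (u : F) = x := (isUnit_iff_ne_zero.mpr hx).unit_spec
  have hpow : ∀ s, (χ ^ (m * s)) x = (χ (x ^ m)) ^ s := fun s => by
    rw [← hux, pow_apply_coe, map_pow, pow_mul]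
  simp_rw [hpow]
  split_ifs with h
  · simp [h]
  · refine (geom_sum_eq (fun h1 => h (eq_one_of_apply_eq_one hχ h1)) d).trans ?_
    rw [map_pow, ← pow_mul, mul_comm, hdm, ← map_pow, FiniteField.pow_card_sub_one_eq_one x hx,
      map_one, sub_self, zero_div]

theorem eq_of_pow_two_mul_apply_eq (hχ : ∀ ψ : MulChar F ℂ, ψ ∈ Subgroup.zpowers χ) {m : ℕ}
    (hm : 4 * m = Fintype.card F - 1) (hodd : Odd m) {k k' : Fin m}
    (h : ∀ x : F, x ^ m = 1 → (χ ^ (2 * (k : ℕ))) x = (χ ^ (2 * (k' : ℕ))) x) : k = k' := by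
  have h8 : χ ^ (8 * (k : ℕ)) = χ ^ (8 * (k' : ℕ)) := MulChar.ext fun y => by
    have hy : ((y ^ 4 : Fˣ) : F) ^ m = 1 := by
      rw [Units.val_pow_eq_pow_val, ← pow_mul, hm,
        FiniteField.pow_card_sub_one_eq_one _ y.ne_zero]
    have := h _ hy
    simp only [pow_apply_coe, Units.val_pow_eq_pow_val, map_pow, ← pow_mul] at this ⊢
    convert this using 2 <;> ring
  rw [pow_eq_pow_iff_modEq, orderOf_eq_card_sub_one hχ, ← hm,
    show 8 * (k : ℕ) = 4 * (2 * k) by ring, show 8 * (k' : ℕ) = 4 * (2 * k') by ring] at h8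
  have h2 := Nat.ModEq.cancel_left_of_coprime (Nat.coprime_two_right.mpr hodd)
    (Nat.ModEq.mul_left_cancel' (by norm_num) h8)
  exact Fin.ext (h2.eq_of_lt_of_lt k.2 k'.2)

theorem sum_pow_eq_one_eq_inv_mul_sum_sum [DecidableEq F]
    (hχ : ∀ ψ : MulChar F ℂ, ψ ∈ Subgroup.zpowers χ) {d m : ℕ}
    (hdm : d * m = Fintype.card F - 1) (f : F → ℂ) :
    ∑ x with x ^ m = 1, f x = (d : ℂ)⁻¹ * ∑ s ∈ range d, ∑ x, (χ ^ (m * s)) x * f x := by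
  have hd : (d : ℂ) ≠ 0 := by
    have := Fintype.one_lt_card (α := F)
    exact Nat.cast_ne_zero.mpr (by rintro rfl; omega)
  simp_rw [sum_comm (s := range d), ← sum_mul, sum_range_pow_mul_apply hχ hdm, mul_sum, sum_filter]
  refine sum_congr rfl fun x _ => ?_
  split_ifs
  · field_simp
  · simp

end MulChar

theorem sum_add_sub_mul_inv_eq_jacobiSum (hχ : ∀ ψ : MulChar F ℂ, ψ ∈ Subgroup.zpowers χ)
    {m : ℕ} (hm : 4 * m = Fintype.card F - 1) (hodd : Odd m) (ψ η : MulChar F ℂ)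
    (hη : η (-1) = 1) {n : Type*} [Fintype n] (e : n ≃ rootsOfUnity m F) :
    ∑ i, (ψ (((e i : Fˣ) : F) + 1) + ψ (((e i : Fˣ) : F) - 1)) * (ψ * η) ((e i : Fˣ) : F)⁻¹
      = 2⁻¹ * (jacobiSum ψ η + jacobiSum ψ (χ ^ (2 * m) * η)) := by
  classical
  have : NeZero m := ⟨hodd.pos.ne'⟩
  have h1 : (-1 : F) ≠ 1 := Ring.neg_one_ne_one_of_char_ne_two <| by
    rw [Ne, FiniteField.even_card_iff_char_two]
    have := hodd.pos
    omega
  calc _ = ∑ x with x ^ m = 1, (ψ (x + 1) + ψ (x - 1)) * (ψ * η) x⁻¹ :=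
        sum_equiv_rootsOfUnity_eq_sum_pow_eq_one e fun x => (ψ (x + 1) + ψ (x - 1)) * (ψ * η) x⁻¹
    _ = ∑ x with x ^ m = 1, (ψ (1 - x) * η x + ψ (1 - -x) * η (-x)) := by
        refine (sum_pow_eq_one_inv m _).symm.trans (sum_congr rfl fun x hx => ?_)
        have hx0 : x ≠ 0 := by
          rintro rfl
          simp [hodd.pos.ne'] at hx
        have hη' : η (-x) = η x := by rw [neg_eq_neg_one_mul, map_mul, hη, one_mul]
        rw [inv_inv, MulChar.mul_apply, hη', sub_neg_eq_add, add_mul, ← mul_assoc, ← mul_assoc,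
          ← map_mul, ← map_mul, add_comm]
        congr 3 <;> field_simp
    _ = ∑ x with x ^ (2 * m) = 1, ψ (1 - x) * η x := sum_pow_eq_one_add_neg hodd h1 _
    _ = 2⁻¹ * ∑ s ∈ range 2, jacobiSum (χ ^ (2 * m * s) * η) ψ := by
        rw [MulChar.sum_pow_eq_one_eq_inv_mul_sum_sum hχ (d := 2) (by omega)]
        simp only [jacobiSum, MulChar.mul_apply, mul_assoc, mul_comm (η _), Nat.cast_ofNat]
    _ = _ := by simp [sum_range_succ, jacobiSum_comm ψ]

theorem det_add_sub_eq_prod_jacobiSum (hχ : ∀ ψ : MulChar F ℂ, ψ ∈ Subgroup.zpowers χ)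
    {m : ℕ} (hm : 4 * m = Fintype.card F - 1) (hodd : Odd m) (ψ : MulChar F ℂ)
    (e : Fin m ≃ rootsOfUnity m F) :
    (Matrix.of fun i j => ψ (((e i : Fˣ) : F) + ((e j : Fˣ) : F))
        + ψ (((e i : Fˣ) : F) - ((e j : Fˣ) : F))).det
      = ∏ k : Fin m, 2⁻¹ * (jacobiSum ψ (χ ^ (2 * (k : ℕ)))
          + jacobiSum ψ (χ ^ (2 * m) * χ ^ (2 * (k : ℕ)))) := by
  set ρ : rootsOfUnity m F →* F := (Units.coeHom F).comp (rootsOfUnity m F).subtype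
  set ω : Fin m → rootsOfUnity m F →* ℂ := fun k => (ψ * χ ^ (2 * (k : ℕ))).toMonoidHom.comp ρ
  have hM : (Matrix.of fun i j => ψ (ρ (e i) + ρ (e j)) + ψ (ρ (e i) - ρ (e j)))
      = Matrix.of (fun i j => ψ (ρ (e i / e j) + 1) + ψ (ρ (e i / e j) - 1))
        * Matrix.diagonal fun j => ψ (ρ (e j)) := by
    ext i j
    have hj : ρ (e j) ≠ 0 := Units.ne_zero _
    rw [Matrix.mul_diagonal, Matrix.of_apply, Matrix.of_apply, map_div, add_mul, ← map_mul,
      ← map_mul, add_one_mul, sub_one_mul, div_mul_cancel₀ _ hj]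
  have hprod : ∏ j, ψ (ρ (e j)) = 1 := by
    let := Fintype.ofEquiv _ e
    have hodd' : Odd (Fintype.card (rootsOfUnity m F)) := by
      rwa [← Fintype.card_congr e, Fintype.card_fin]
    have he : ∏ j, e j = ∏ g, g := e.prod_comp fun g => g
    calc ∏ j, ψ (ρ (e j)) = (ψ.toMonoidHom.comp ρ) (∏ j, e j) :=
        (map_prod (ψ.toMonoidHom.comp ρ) (fun j => e j) univ).symm
      _ = 1 := by rw [he, prod_univ_eq_one_of_odd_card hodd', map_one]
  have hω : Function.Injective ω := fun k k' h => by
    refine MulChar.eq_of_pow_two_mul_apply_eq hχ hm hodd fun x hx => ?_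
    have : NeZero m := ⟨hodd.pos.ne'⟩
    have hx0 : ψ x ≠ 0 := ψ.apply_ne_zero_iff.mpr (IsUnit.of_pow_eq_one hx hodd.pos.ne')
    have := DFunLike.congr_fun h (rootsOfUnity.mkOfPowEq x hx)
    simpa [ω, ρ, hx0] using this
  change (Matrix.of fun i j => ψ (ρ (e i) + ρ (e j)) + ψ (ρ (e i) - ρ (e j))).det = _
  rw [hM, Matrix.det_mul, Matrix.det_diagonal, hprod, mul_one,
    Matrix.det_of_apply_div_eq_prod_sum e ω hω fun x => ψ (ρ x + 1) + ψ (ρ x - 1)]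
  refine prod_congr rfl fun k _ => ?_
  have hη : (χ ^ (2 * (k : ℕ))) (-1) = 1 := by
    rw [pow_mul', MulChar.pow_apply' _ two_ne_zero, sq, ← map_mul, neg_mul_neg, mul_one, map_one]
  have hωk : ∀ x, ω k x⁻¹ = (ψ * χ ^ (2 * (k : ℕ))) ((x : Fˣ) : F)⁻¹ := fun x =>
    congrArg (ψ * χ ^ (2 * (k : ℕ))) (Units.val_inv_eq_inv_val (x : Fˣ))
  simp only [hωk]
  exact sum_add_sub_mul_inv_eq_jacobiSum hχ hm hodd ψ (χ ^ (2 * (k : ℕ))) hη e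

end FiniteField

theorem det_B_q_4_eq_general (q : ℕ)
    (hq5 : q % 8 = 5)
    (F : Type*) [Field F] [Fintype F] (hcard : Fintype.card F = q)
    (χ : MulChar F ℂ) (hχ : ∀ ψ : MulChar F ℂ, ψ ∈ Subgroup.zpowers χ)
    (r : ℕ)
    (b : Fin ((q - 1) / 4) → F) (hb : Function.Injective b)
    (hbimg : ∀ x : F, (∃ i, b i = x) ↔ ∃ y : F, y ≠ 0 ∧ y ^ 4 = x) :
    (Matrix.of fun i j => (χ ^ r) (b i + b j) + (χ ^ r) (b i - b j)).det
      = (1 / 2 : ℂ) ^ ((q - 1) / 4)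
          * ∏ k ∈ Finset.range ((q - 1) / 4),
              (jacobiSum (χ ^ r) (χ ^ (2 * k))
                + jacobiSum (χ ^ r) (χ ^ ((q - 1) / 2) * χ ^ (2 * k))) := by
  have h2 : (q - 1) / 2 = 2 * ((q - 1) / 4) := by omega
  rw [h2]
  revert b
  generalize hm : (q - 1) / 4 = m
  intro b hb hbimg
  replace hm : 4 * m = Fintype.card F - 1 := by omega
  have hodd : Odd m := Nat.odd_iff.mpr (by omega)
  have : NeZero m := ⟨hodd.pos.ne'⟩
  have hb1 : ∀ i, b i ^ m = 1 := fun i => by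
    obtain ⟨y, hy, hyb⟩ := (hbimg (b i)).mp ⟨i, rfl⟩
    rw [← hyb, ← pow_mul, hm, FiniteField.pow_card_sub_one_eq_one y hy]
  obtain ⟨e, rfl⟩ := exists_equiv_rootsOfUnity hb hb1
  rw [det_add_sub_eq_prod_jacobiSum hχ hm hodd, prod_mul_distrib, prod_const, card_univ,
    Fintype.card_fin, Fin.prod_univ_eq_prod_range (fun k => jacobiSum (χ ^ r) (χ ^ (2 * k))
      + jacobiSum (χ ^ r) (χ ^ (2 * m) * χ ^ (2 * k))), one_div]

/-- For `q ≡ 5 (mod 8)`, `χ` a generator, `1 ≤ r ≤ q-2`, and `b_1,…,b_{(q-1)/4}`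
the nonzero fourth powers of `F_q`,
`det[χ^r(b_i+b_j) + χ^r(b_i-b_j)] = (1/2)^{(q-1)/4} ∏_{k=0}^{(q-5)/4}
  (J_q(χ^r, χ^{2k}) + J_q(χ^r, φχ^{2k}))`, where `φ = χ^{(q-1)/2}`. -/
theorem det_B_q_4_eq (p n q : ℕ) [Fact p.Prime] (hn : 0 < n) (hq : q = p ^ n)
    (hq5 : q % 8 = 5)
    (F : Type*) [Field F] [Fintype F] (hcard : Fintype.card F = q)
    (χ : MulChar F ℂ) (hχ : ∀ ψ : MulChar F ℂ, ψ ∈ Subgroup.zpowers χ)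
    (r : ℕ) (hr1 : 1 ≤ r) (hr2 : r ≤ q - 2)
    (b : Fin ((q - 1) / 4) → F) (hb : Function.Injective b)
    (hbimg : ∀ x : F, (∃ i, b i = x) ↔ ∃ y : F, y ≠ 0 ∧ y ^ 4 = x) :
    (Matrix.of fun i j => (χ ^ r) (b i + b j) + (χ ^ r) (b i - b j)).det
      = (1 / 2 : ℂ) ^ ((q - 1) / 4)
          * ∏ k ∈ Finset.range ((q - 1) / 4),
              (jacobiSum (χ ^ r) (χ ^ (2 * k))
                + jacobiSum (χ ^ r) (χ ^ ((q - 1) / 2) * χ ^ (2 * k))) :=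
  det_B_q_4_eq_general q hq5 F hcard χ hχ r b hb hbimg
end

section
/- Let q = p^n ≡ 3 (mod 4) be an odd prime power and 1 ≤ r ≤ q-2 an integer. Define the matrix T over F_q by T = [(s_i+s_j)^{q-1-r} + (s_i-s_j)^{q-1-r}]_{1≤i,j≤(q-1)/2}, where s_1, ..., s_{(q-1)/2} are the nonzero squares of F_q. Then det(T) = (-1)^{(q-1)/2} ∏_{k=0}^{(q-3)/2} binom(r+2k, r) modulo p, where the binomial coefficients are interpreted in F_p ⊆ F_q. -/
/-!
The nonzero squares of `𝔽_q` are exactly the `m`-th roots of unity, `m = (q - 1) / 2`, and `m` is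
odd. Enumerating them as `ζ ^ i` for a primitive root `ζ` only permutes rows and columns of `T`.
Expanding binomially and using `ζ ^ m = 1`,
`T = diag(ζ^{ie}) · V(ω⁻¹) · diag(2 C(e, 2t)) · V(ω)` with `e = q - 1 - r`, `ω = ζ²` and `V` the
Vandermonde matrix of the powers of `ω`; `ω` is again primitive since `m` is odd, so
`V(ω⁻¹) V(ω) = m · 1` by orthogonality. Hence `det T = (2m)^m ∏ C(e, 2t)`, where `2m = q - 1 = -1`
in `𝔽_q`, and `C(q - 1 - r, j) = (-1)^j C(r + j, r)` in characteristic `p` because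
`(1 + X)^(q-1-r) = (1 + X^q) (1 + X)^(-(r+1))`.
-/

open Finset Matrix

theorem Finset.sum_range_two_mul {M : Type*} [AddCommMonoid M] (m : ℕ) (f : ℕ → M) :
    ∑ k ∈ range (2 * m), f k = ∑ t ∈ range m, (f (2 * t) + f (2 * t + 1)) := by
  induction m with
  | zero => simp
  | succ m ih => rw [Nat.mul_succ, sum_range_succ, sum_range_succ, ih, sum_range_succ, add_assoc]

theorem one_add_pow_add_one_sub_pow_eq_sum {R : Type*} [CommRing R] (z : R) {e m : ℕ}
    (he : e < 2 * m) :
    (1 + z) ^ e + (1 - z) ^ e = ∑ t ∈ range m, 2 * (e.choose (2 * t) : R) * z ^ (2 * t) := by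
  have hbinom : (1 + z) ^ e + (1 - z) ^ e
      = ∑ k ∈ range (2 * m), (1 + (-1) ^ k) * (e.choose k : R) * z ^ k := by
    rw [add_comm 1 z, sub_eq_add_neg, add_comm 1 (-z), add_pow, add_pow, ← sum_add_distrib]
    rw [sum_subset (range_subset_range.mpr he) fun k _ hk => ?_]
    · refine sum_congr rfl fun k _ => ?_
      rw [neg_pow]
      ring
    · rw [Nat.choose_eq_zero_of_lt (by simpa using hk)]
      simp
  rw [hbinom, sum_range_two_mul]
  refine sum_congr rfl fun t _ => ?_
  rw [pow_succ, pow_mul]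
  norm_num

theorem add_pow_add_sub_pow_eq_mul_sum {F : Type*} [Field F] {x : F} (hx : x ≠ 0) (y : F)
    {e m : ℕ} (he : e < 2 * m) :
    (x + y) ^ e + (x - y) ^ e
      = x ^ e * ∑ t ∈ range m, 2 * (e.choose (2 * t) : F) * (y / x) ^ (2 * t) := by
  rw [← one_add_pow_add_one_sub_pow_eq_sum _ he, mul_add, ← mul_pow, ← mul_pow, mul_add, mul_sub,
    mul_one, mul_div_cancel₀ _ hx]

theorem IsPrimitiveRoot.vandermonde_inv_mul_vandermonde {F : Type*} [Field F] {ω : F} {m : ℕ}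
    (hω : IsPrimitiveRoot ω m) :
    vandermonde (fun a : Fin m => ω⁻¹ ^ (a : ℕ)) * vandermonde (fun a : Fin m => ω ^ (a : ℕ))
      = (m : F) • 1 := by
  ext a b
  have hω0 : ω ≠ 0 := hω.ne_zero a.pos.ne'
  simp only [mul_apply, vandermonde_apply, Matrix.smul_apply, one_apply, smul_eq_mul, mul_ite,
    mul_one, mul_zero]
  have hterm : ∀ c : Fin m, (ω⁻¹ ^ (a : ℕ)) ^ (c : ℕ) * (ω ^ (c : ℕ)) ^ (b : ℕ)
      = (ω⁻¹ ^ (a : ℕ) * ω ^ (b : ℕ)) ^ (c : ℕ) := fun c => by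
    rw [mul_pow, pow_right_comm ω]
  rw [sum_congr rfl fun c _ => hterm c, Fin.sum_univ_eq_sum_range (fun c => (_ : F) ^ c)]
  split_ifs with hab
  · subst hab
    simp [hω0]
  · have hne : ω⁻¹ ^ (a : ℕ) * ω ^ (b : ℕ) ≠ 1 := by
      rw [Ne, inv_pow, inv_mul_eq_one₀ (pow_ne_zero _ hω0)]
      exact fun h => hab (Fin.ext (hω.pow_inj a.isLt b.isLt h))
    rw [geom_sum_eq hne, mul_pow, ← pow_mul, ← pow_mul, mul_comm (a : ℕ), mul_comm (b : ℕ),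
      pow_mul, pow_mul, inv_pow, hω.pow_eq_one]
    simp

theorem prod_range_pow_eq_one_of_odd {M : Type*} [CommMonoid M] {ζ : M} {m : ℕ}
    (hζ : ζ ^ m = 1) (hm : Odd m) : ∏ i ∈ range m, ζ ^ i = 1 := by
  obtain ⟨k, rfl⟩ := hm
  have hsum : ∑ i ∈ range (2 * k + 1), i = (2 * k + 1) * k := by
    have := sum_range_id_mul_two (2 * k + 1)
    simp only [add_tsub_cancel_right] at this
    nlinarith
  rw [prod_pow_eq_pow_sum, hsum, pow_mul, hζ, one_pow]

theorem IsPrimitiveRoot.det_pow_add_add_pow_sub {F : Type*} [Field F] {ζ : F} {m e : ℕ}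
    (hζ : IsPrimitiveRoot ζ m) (hm : Odd m) (he : e < 2 * m) :
    (Matrix.of fun i j : Fin m =>
        (ζ ^ (i : ℕ) + ζ ^ (j : ℕ)) ^ e + (ζ ^ (i : ℕ) - ζ ^ (j : ℕ)) ^ e).det
      = (2 * m : F) ^ m * ∏ t ∈ range m, (e.choose (2 * t) : F) := by
  have hζ0 : ζ ≠ 0 := hζ.ne_zero hm.pos.ne'
  set ω := ζ ^ 2
  have hω : IsPrimitiveRoot ω m := hζ.pow_of_coprime 2 (Nat.coprime_two_left.mpr hm)
  have hfactor : (Matrix.of fun i j : Fin m =>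
        (ζ ^ (i : ℕ) + ζ ^ (j : ℕ)) ^ e + (ζ ^ (i : ℕ) - ζ ^ (j : ℕ)) ^ e)
      = diagonal (fun i : Fin m => (ζ ^ (i : ℕ)) ^ e) *
          (vandermonde (fun a : Fin m => ω⁻¹ ^ (a : ℕ)) *
            (diagonal (fun t : Fin m => 2 * (e.choose (2 * t) : F)) *
              vandermonde (fun a : Fin m => ω ^ (a : ℕ)))) := by
    ext i j
    rw [of_apply, add_pow_add_sub_pow_eq_mul_sum (pow_ne_zero _ hζ0) _ he, diagonal_mul,
      mul_apply, ← Fin.sum_univ_eq_sum_range (fun t => 2 * (e.choose (2 * t) : F) * _)]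
    congr 1
    refine sum_congr rfl fun t _ => ?_
    simp only [diagonal_mul, vandermonde_apply, ω]
    field_simp
    ring
  have hprod_pow : ∏ i : Fin m, (ζ ^ (i : ℕ)) ^ e = 1 := by
    rw [prod_pow, Fin.prod_univ_eq_prod_range (ζ ^ ·),
      prod_range_pow_eq_one_of_odd hζ.pow_eq_one hm, one_pow]
  have hdet_vandermonde : (vandermonde (fun a : Fin m => ω⁻¹ ^ (a : ℕ))).det *
      (vandermonde (fun a : Fin m => ω ^ (a : ℕ))).det = (m : F) ^ m := by
    rw [← det_mul, hω.vandermonde_inv_mul_vandermonde, det_smul, det_one, Fintype.card_fin,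
      mul_one]
  rw [hfactor, det_mul, det_mul, det_mul, det_diagonal, det_diagonal, hprod_pow, one_mul,
    mul_left_comm, hdet_vandermonde, prod_mul_distrib, prod_const, card_univ, Fintype.card_fin,
    Fin.prod_univ_eq_prod_range (fun t => (e.choose (2 * t) : F))]
  ring

open PowerSeries in
theorem cast_choose_prime_pow_sub_one_sub {R : Type*} [CommRing R] (p : ℕ) [Fact p.Prime]
    [CharP R p] {n r j : ℕ} (hr : r < p ^ n) (hj : j < p ^ n) :
    ((p ^ n - 1 - r).choose j : R) = (-1) ^ j * ((r + j).choose r : R) := by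
  have : CharP R⟦X⟧ p := charP_of_injective_ringHom C_injective p
  -- `G = (1 + X)⁻¹ ^ (r + 1)`
  set G : R⟦X⟧ := rescale (-1) (invOneSubPow R (r + 1)).val
  have hG : (1 + X : R⟦X⟧) ^ (r + 1) * G = 1 := by
    have h := congrArg (rescale (-1 : R)) (invOneSubPow R (r + 1)).inv_val
    rwa [invOneSubPow_inv_eq_one_sub_pow, map_mul, map_pow, map_one, map_sub, map_one,
      rescale_neg_one_X, sub_neg_eq_add] at h
  have hfrob : (1 + X : R⟦X⟧) ^ (p ^ n - 1 - r) * (1 + X) ^ (r + 1) = 1 + X ^ p ^ n := by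
    rw [← pow_add, show p ^ n - 1 - r + (r + 1) = p ^ n by omega, add_pow_char_pow, one_pow]
  have hexp : (1 + X : R⟦X⟧) ^ (p ^ n - 1 - r) = G + G * X ^ p ^ n := by
    linear_combination -(1 + X : R⟦X⟧) ^ (p ^ n - 1 - r) * hG + G * hfrob
  have hcoeff := congrArg (coeff j) hexp
  have hpoly : (((1 + Polynomial.X) ^ (p ^ n - 1 - r) : Polynomial R) : R⟦X⟧)
      = (1 + X) ^ (p ^ n - 1 - r) := by
    simp
  rwa [← hpoly, Polynomial.coeff_coe, Polynomial.coeff_one_add_X_pow,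
    map_add, coeff_mul_X_pow', if_neg (by omega), add_zero, coeff_rescale,
    invOneSubPow_val_succ_eq_mk_add_choose, coeff_mk] at hcoeff

theorem FiniteField.exists_isPrimitiveRoot {F : Type*} [Field F] [Finite F] {m : ℕ}
    (hm : m ∣ Nat.card F - 1) : ∃ ζ : F, IsPrimitiveRoot ζ m := by
  obtain ⟨g, hg⟩ := IsCyclic.exists_generator (α := Fˣ)
  have hg_prim : IsPrimitiveRoot (g : F) (Nat.card F - 1) := by
    rw [← Nat.card_units, ← orderOf_eq_card_of_forall_mem_zpowers hg, ← orderOf_units]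
    exact IsPrimitiveRoot.orderOf _
  obtain ⟨k, hk⟩ := hm
  have hpos : 0 < Nat.card F - 1 := by
    have : 1 < Nat.card F := Finite.one_lt_card
    omega
  exact ⟨_, hg_prim.pow hpos (hk.trans (mul_comm _ _))⟩

theorem Matrix.det_of_apply_congr_of_mem_range {ι α R : Type*} [Fintype ι] [DecidableEq ι]
    [CommRing R] (f : α → α → R) {s w : ι → α} (hw : Function.Injective w)
    (hws : ∀ i, w i ∈ Set.range s) :
    (of fun i j => f (s i) (s j)).det = (of fun i j => f (w i) (w j)).det := by
  choose σ hσ using hws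
  have hσ_inj : Function.Injective σ := fun i j h => hw (by rw [← hσ i, ← hσ j, h])
  rw [← det_submatrix_equiv_self (Equiv.ofBijective σ hσ_inj.bijective_of_finite)]
  congr 1
  ext i j
  simp [hσ]

theorem det_T_q_2_eq_prod_binom_general (p n q : ℕ) [Fact p.Prime] (hq : q = p ^ n)
    (hq3 : q % 4 = 3)
    (F : Type*) [Field F] [Fintype F] (hcard : Fintype.card F = q)
    (r : ℕ) (hr1 : 1 ≤ r) (hr2 : r ≤ q - 2)
    (s : Fin ((q - 1) / 2) → F)
    (hsimg : ∀ x : F, (∃ i, s i = x) ↔ ∃ y : F, y ≠ 0 ∧ y ^ 2 = x) :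
    (Matrix.of fun i j => (s i + s j) ^ (q - 1 - r) + (s i - s j) ^ (q - 1 - r)).det
      = (-1 : F) ^ ((q - 1) / 2)
          * ∏ k ∈ Finset.range ((q - 1) / 2), ((r + 2 * k).choose r : F) := by
  generalize hm : (q - 1) / 2 = m at s hsimg ⊢
  have hm_odd : Odd m := Nat.odd_iff.mpr (by omega)
  have : CharP F p := charP_of_card_eq_prime_pow (hcard.trans hq)
  obtain ⟨ζ, hζ⟩ : ∃ ζ : F, IsPrimitiveRoot ζ m :=
    FiniteField.exists_isPrimitiveRoot ⟨2, by rw [Nat.card_eq_fintype_card, hcard]; omega⟩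
  have hζ_sq (i : Fin m) : ζ ^ (i : ℕ) ∈ Set.range s := by
    obtain ⟨k, hk⟩ := hζ.exists_pow_eq_pow_two_mul hm_odd i
    exact (hsimg (ζ ^ (i : ℕ))).mpr
      ⟨ζ ^ k, pow_ne_zero _ (hζ.ne_zero hm_odd.pos.ne'), by rw [hk, pow_mul']⟩
  have hζ_inj : Function.Injective fun i : Fin m => ζ ^ (i : ℕ) :=
    fun i j h => Fin.ext (hζ.pow_inj i.isLt j.isLt h)
  have htwo_m : (2 * m : F) = -1 := by
    have hq0 : (q : F) = 0 := hcard ▸ FiniteField.cast_card_eq_zero F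
    have hcast := congrArg (Nat.cast : ℕ → F) (show 2 * m + 1 = q by omega)
    push_cast at hcast
    linear_combination hcast + hq0
  have hchoose (t : ℕ) (ht : t ∈ range m) :
      ((q - 1 - r).choose (2 * t) : F) = ((r + 2 * t).choose r : F) := by
    have ht' := mem_range.mp ht
    subst hq
    rw [cast_choose_prime_pow_sub_one_sub p (by omega) (by omega), (even_two_mul t).neg_one_pow,
      one_mul]
  rw [det_of_apply_congr_of_mem_range (fun x y => (x + y) ^ (q - 1 - r) + (x - y) ^ (q - 1 - r))
    hζ_inj hζ_sq, hζ.det_pow_add_add_pow_sub hm_odd (by omega), htwo_m, prod_congr rfl hchoose]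

/-- For `q = p^n ≡ 3 (mod 4)` and `1 ≤ r ≤ q-2`, the matrix
`T = [(s_i+s_j)^{q-1-r} + (s_i-s_j)^{q-1-r}]` over `F_q` (with `s_i` the nonzero squares)
satisfies `det T = (-1)^{(q-1)/2} ∏_{k=0}^{(q-3)/2} binom(r+2k, r)`, the binomial
coefficients being interpreted in `F_p ⊆ F_q`. -/
theorem det_T_q_2_eq_prod_binom (p n q : ℕ) [Fact p.Prime] (hn : 0 < n) (hq : q = p ^ n)
    (hq3 : q % 4 = 3)
    (F : Type*) [Field F] [Fintype F] (hcard : Fintype.card F = q)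
    (r : ℕ) (hr1 : 1 ≤ r) (hr2 : r ≤ q - 2)
    (s : Fin ((q - 1) / 2) → F) (hs : Function.Injective s)
    (hsimg : ∀ x : F, (∃ i, s i = x) ↔ ∃ y : F, y ≠ 0 ∧ y ^ 2 = x) :
    (Matrix.of fun i j => (s i + s j) ^ (q - 1 - r) + (s i - s j) ^ (q - 1 - r)).det
      = (-1 : F) ^ ((q - 1) / 2)
          * ∏ k ∈ Finset.range ((q - 1) / 2), ((r + 2 * k).choose r : F) :=
  det_T_q_2_eq_prod_binom_general p n q hq hq3 F hcard r hr1 hr2 s hsimg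
end

section
/- Let q = p^n ≡ 3 (mod 4) be an odd prime power, and let 1 ≤ r ≤ q-2. Define T = [(s_i+s_j)^{q-1-r} + (s_i-s_j)^{q-1-r}]_{1≤i,j≤(q-1)/2} over F_q, where s_1,...,s_{(q-1)/2} are the nonzero squares of F_q. Then T is nonsingular if and only if n = 1 and r ∈ {1, 2}. -/
/-!
Write `d = q - 1 - r` and `m = (q - 1) / 2`. Since `d < 2m`, the binomial theorem gives
`(x + y)^d + (x - y)^d = ∑_{l < m} 2 binom(d, 2l) x^(d - 2l) y^(2l)`, so `T` factors as
`diag(s_i^d) · V((s_i²)⁻¹) · diag(2 binom(d, 2l)) · V(s_j²)ᵀ` with Vandermonde matrices `V`.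
The `s_i²` are distinct because `-1` is not a square when `q ≡ 3 (mod 4)`, so `T` is nonsingular
iff `p ∤ binom(d, 2l)` for all `l < m`. For `n = 1` and `r ≤ 2` this holds as `d < p`;
`r ≥ 3` makes `binom(d, q - 3)` vanish, and for `n ≥ 2` Lucas' theorem gives `p ∣ binom(d, p - 1)`
because the last base-`p` digit of `d` is `p - 1 - r < p - 1`.
-/

open Finset Matrix

lemma Finset.sum_range_two_mul_of_odd_eq_zero {R : Type*} [AddCommMonoid R] (M : ℕ)
    (g : ℕ → R) (h : ∀ l, g (2 * l + 1) = 0) :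
    ∑ k ∈ range (2 * M), g k = ∑ l ∈ range M, g (2 * l) := by
  induction M with
  | zero => simp
  | succ M ih => rw [Nat.mul_succ, sum_range_succ, sum_range_succ, sum_range_succ, ih, h, add_zero]

lemma add_pow_add_sub_pow_eq_sum {R : Type*} [CommRing R] (x y : R) {d M : ℕ} (hd : d < 2 * M) :
    (x + y) ^ d + (x - y) ^ d
      = ∑ l ∈ range M, 2 * (d.choose (2 * l) : R) * x ^ (d - 2 * l) * y ^ (2 * l) := by
  set g : ℕ → R := fun k => (y ^ k + (-y) ^ k) * x ^ (d - k) * (d.choose k : R)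
  have h_expand : (x + y) ^ d + (x - y) ^ d = ∑ k ∈ range (d + 1), g k := by
    rw [add_comm x y, sub_eq_add_neg, add_comm x (-y), add_pow, add_pow, ← sum_add_distrib]
    exact sum_congr rfl fun k _ => by ring
  have h_extend : ∑ k ∈ range (d + 1), g k = ∑ k ∈ range (2 * M), g k := by
    refine sum_subset (range_subset_range.mpr (by omega)) fun k _ hk => ?_
    simp [g, Nat.choose_eq_zero_of_lt (not_lt.mp (mem_range.not.mp hk))]
  rw [h_expand, h_extend, sum_range_two_mul_of_odd_eq_zero]
  · refine sum_congr rfl fun l _ => ?_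
    simp only [g, Even.neg_pow ⟨l, two_mul l⟩]
    ring
  · intro l
    simp [g, Odd.neg_pow ⟨l, rfl⟩]

section Matrix

variable {F : Type*} [Field F] {m d : ℕ}

lemma of_add_pow_add_sub_pow_eq_mul_vandermonde (hd : d < 2 * m) (s : Fin m → F)
    (hs0 : ∀ i, s i ≠ 0) :
    (of fun i j => (s i + s j) ^ d + (s i - s j) ^ d)
      = diagonal (fun i => s i ^ d) * vandermonde (fun i => (s i ^ 2)⁻¹)
        * diagonal (fun l : Fin m => 2 * (d.choose (2 * (l : ℕ)) : F))
        * (vandermonde fun j => s j ^ 2)ᵀ := by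
  ext i j
  rw [mul_apply]
  simp only [mul_diagonal, diagonal_mul, vandermonde_apply, transpose_apply, of_apply]
  rw [add_pow_add_sub_pow_eq_sum _ _ hd, ← Fin.sum_univ_eq_sum_range]
  refine sum_congr rfl fun l _ => ?_
  rw [← pow_mul, inv_pow, ← pow_mul]
  by_cases h2l : 2 * (l : ℕ) ≤ d
  · rw [pow_sub₀ _ (hs0 i) h2l]
    ring
  · simp [Nat.choose_eq_zero_of_lt (not_le.mp h2l)]

lemma det_of_add_pow_add_sub_pow_ne_zero_iff (hd : d < 2 * m) (s : Fin m → F)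
    (hs0 : ∀ i, s i ≠ 0) (hs2 : Function.Injective fun i => s i ^ 2) :
    (of fun i j => (s i + s j) ^ d + (s i - s j) ^ d).det ≠ 0
      ↔ ∀ l : Fin m, 2 * (d.choose (2 * (l : ℕ)) : F) ≠ 0 := by
  have hV : (vandermonde fun j => s j ^ 2).det ≠ 0 := det_vandermonde_ne_zero_iff.mpr hs2
  have hV' : (vandermonde fun i => (s i ^ 2)⁻¹).det ≠ 0 :=
    det_vandermonde_ne_zero_iff.mpr (inv_injective.comp hs2)
  have hD : ∏ i, s i ^ d ≠ 0 := prod_ne_zero_iff.mpr fun i _ => pow_ne_zero _ (hs0 i)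
  rw [of_add_pow_add_sub_pow_eq_mul_vandermonde hd s hs0]
  simp only [det_mul, det_transpose, det_diagonal]
  rw [mul_ne_zero_iff, mul_ne_zero_iff, mul_ne_zero_iff]
  simp only [hD, hV, hV', ne_eq, not_false_eq_true, true_and, and_true]
  exact prod_ne_zero_iff.trans (by simp only [mem_univ, forall_const])

lemma det_of_add_pow_add_sub_pow_ne_zero_iff_not_dvd_choose {p : ℕ} [CharP F p] (hp2 : p ≠ 2)
    (hd : d < 2 * m) (s : Fin m → F) (hs0 : ∀ i, s i ≠ 0)
    (hs2 : Function.Injective fun i => s i ^ 2) :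
    (of fun i j => (s i + s j) ^ d + (s i - s j) ^ d).det ≠ 0
      ↔ ∀ l < m, ¬ p ∣ d.choose (2 * l) := by
  have h2 : (2 : F) ≠ 0 := Ring.two_ne_zero (by rwa [ringChar.eq F p])
  rw [det_of_add_pow_add_sub_pow_ne_zero_iff hd s hs0 hs2, Fin.forall_iff]
  simp only [mul_ne_zero_iff, h2, ne_eq, CharP.cast_eq_zero_iff F p, not_false_eq_true, true_and]

end Matrix

lemma Function.Injective.sq_of_isSquare {F : Type*} [Field F] {ι : Type*} {s : ι → F}
    (hs : Function.Injective s) (hsq : ∀ i, IsSquare (s i)) (hneg : ¬ IsSquare (-1 : F)) :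
    Function.Injective fun i => s i ^ 2 := by
  intro i j hij
  rcases sq_eq_sq_iff_eq_or_eq_neg.mp hij with h | h
  · exact hs h
  by_cases hj : s j = 0
  · exact hs (by rw [h, hj, neg_zero])
  obtain ⟨y, hy⟩ := hsq i
  obtain ⟨z, hz⟩ := hsq j
  exact absurd ⟨y / z, by rw [div_mul_div_comm, ← hy, ← hz, h, neg_div_self hj]⟩ hneg

lemma Nat.Prime.dvd_choose_of_mod_lt {p N k : ℕ} (hp : p.Prime) (hkp : k < p) (hN : N % p < k) :
    p ∣ N.choose k := by
  have := Fact.mk hp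
  have hLucas := Choose.choose_modEq_choose_mod_mul_choose_div_nat (n := N) (k := k) (p := p)
  rw [Nat.mod_eq_of_lt hkp, Nat.choose_eq_zero_of_lt hN, zero_mul] at hLucas
  exact Nat.modEq_zero_iff_dvd.mp hLucas

lemma forall_not_dvd_choose_two_mul_iff {p n r : ℕ} (hp : p.Prime) (hp2 : p ≠ 2) (hr1 : 1 ≤ r)
    (hr2 : r ≤ p ^ n - 2) :
    (∀ l < (p ^ n - 1) / 2, ¬ p ∣ (p ^ n - 1 - r).choose (2 * l)) ↔ n = 1 ∧ (r = 1 ∨ r = 2) := by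
  have hp3 : 3 ≤ p := by have := hp.two_le; omega
  have hpodd : p % 2 = 1 := hp.eq_two_or_odd.resolve_left hp2
  have hqodd : p ^ n % 2 = 1 := by simp [Nat.pow_mod, hpodd]
  constructor
  · intro h
    have hr : r ≤ 2 := by
      by_contra! hr
      refine h ((p ^ n - 1) / 2 - 1) (by omega) ?_
      rw [Nat.choose_eq_zero_of_lt (by omega)]
      exact dvd_zero p
    refine ⟨?_, by omega⟩
    by_contra hn
    have hn0 : n ≠ 0 := by rintro rfl; simp at hr2; omega
    obtain ⟨k, rfl⟩ : ∃ k, n = k + 2 := ⟨n - 2, by omega⟩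
    have hQ : p ≤ p ^ (k + 1) := Nat.le_self_pow (by omega) p
    rw [pow_succ'] at h
    have h2p : p * 2 ≤ p * p ^ (k + 1) := Nat.mul_le_mul_left p (by omega)
    have hdigit : (p * p ^ (k + 1) - 1 - r) % p = p - 1 - r := by
      have : p * p ^ (k + 1) - 1 - r = (p - 1 - r) + p * (p ^ (k + 1) - 1) := by
        rw [Nat.mul_sub_one]; omega
      rw [this, Nat.add_mul_mod_self_left, Nat.mod_eq_of_lt (by omega)]
    refine h ((p - 1) / 2) (by omega) ?_
    rw [show 2 * ((p - 1) / 2) = p - 1 by omega]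
    exact hp.dvd_choose_of_mod_lt (by omega) (by omega)
  · rintro ⟨rfl, hr⟩ l hl
    rw [pow_one] at hl ⊢
    exact (Nat.Prime.coprime_iff_not_dvd hp).mp (hp.coprime_choose_of_lt (by omega) (by omega))

theorem T_q_2_nonsingular_iff_general (p n q : ℕ) [Fact p.Prime] (hq : q = p ^ n)
    (hq3 : q % 4 = 3)
    (F : Type*) [Field F] [Fintype F] (hcard : Fintype.card F = q)
    (r : ℕ) (hr1 : 1 ≤ r) (hr2 : r ≤ q - 2)
    (s : Fin ((q - 1) / 2) → F) (hs : Function.Injective s)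
    (hsimg : ∀ x : F, (∃ i, s i = x) ↔ ∃ y : F, y ≠ 0 ∧ y ^ 2 = x) :
    (Matrix.of fun i j => (s i + s j) ^ (q - 1 - r) + (s i - s j) ^ (q - 1 - r)).det ≠ 0
      ↔ n = 1 ∧ (r = 1 ∨ r = 2) := by
  have hp : p.Prime := Fact.out
  have hp2 : p ≠ 2 := by
    rintro rfl
    have hn : n ≠ 0 := by rintro rfl; simp_all
    have : 2 ∣ q := hq ▸ dvd_pow_self 2 hn
    omega
  have : CharP F p := charP_of_card_eq_prime_pow (hcard.trans hq)
  have hneg : ¬ IsSquare (-1 : F) := by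
    rw [FiniteField.isSquare_neg_one_iff, hcard]
    omega
  have hsq : ∀ i, ∃ y, y ≠ 0 ∧ y ^ 2 = s i := fun i => (hsimg (s i)).mp ⟨i, rfl⟩
  have hs0 : ∀ i, s i ≠ 0 := fun i => (hsq i).elim fun y hy => hy.2 ▸ pow_ne_zero 2 hy.1
  have hs2 := hs.sq_of_isSquare (fun i => (hsq i).elim fun y hy => ⟨y, by rw [← hy.2, sq]⟩) hneg
  subst hq
  rw [det_of_add_pow_add_sub_pow_ne_zero_iff_not_dvd_choose hp2 (by omega) s hs0 hs2,
    forall_not_dvd_choose_two_mul_iff hp hp2 hr1 hr2]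

/-- For `q = p^n ≡ 3 (mod 4)` and `1 ≤ r ≤ q-2`, the matrix
`T = [(s_i+s_j)^{q-1-r} + (s_i-s_j)^{q-1-r}]` over `F_q` (with `s_i` the nonzero squares)
is nonsingular if and only if `n = 1` and `r ∈ {1, 2}`. -/
theorem T_q_2_nonsingular_iff (p n q : ℕ) [Fact p.Prime] (hn : 0 < n) (hq : q = p ^ n)
    (hq3 : q % 4 = 3)
    (F : Type*) [Field F] [Fintype F] (hcard : Fintype.card F = q)
    (r : ℕ) (hr1 : 1 ≤ r) (hr2 : r ≤ q - 2)
    (s : Fin ((q - 1) / 2) → F) (hs : Function.Injective s)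
    (hsimg : ∀ x : F, (∃ i, s i = x) ↔ ∃ y : F, y ≠ 0 ∧ y ^ 2 = x) :
    (Matrix.of fun i j => (s i + s j) ^ (q - 1 - r) + (s i - s j) ^ (q - 1 - r)).det ≠ 0
      ↔ n = 1 ∧ (r = 1 ∨ r = 2) :=
  T_q_2_nonsingular_iff_general p n q hq hq3 F hcard r hr1 hr2 s hs hsimg
end

section
/- Let q = p^n be an odd prime power, K = Q(ζ_{q-1}, ζ_p), and let 𝔭 be a prime ideal of the ring of integers of K above p, so that O_K/𝔭 ≅ F_q. Let χ_𝔭 be the Teichmüller character of 𝔭 (so χ_𝔭(x) ≡ x mod 𝔭 for all x ∈ F_q). For integers 1 ≤ a, b ≤ q-2, the Jacobi sum satisfies J_q(χ_𝔭^{-a}, χ_𝔭^{-b}) ≡ -binom(a+b, a) (mod 𝔭); in particular if a + b ≥ q then J_q(χ_𝔭^{-a}, χ_𝔭^{-b}) ≡ 0 (mod 𝔭). -/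
/-!
Modulo `𝔭` the Jacobi sum becomes `∑ x^(q-1-a) (1-x)^(q-1-b)` over `F_q`, because
`χ^(q-1-a)(x) ≡ x^(q-1-a)`. The substitution `x = (1-y)⁻¹` turns this into
`±∑ y^(q-1-b) (1-y)^(a+b)`; expanding binomially and using that `∑ y^m` is `-1` when
`q - 1 ∣ m > 0` and `0` otherwise, only the monomial `y^(q-1)` survives, with coefficient
`binom(a+b, b)`. When `a + b ≥ q`, expanding the original sum directly leaves only exponents
below `q - 1`, so it vanishes.
-/

open Finset

theorem one_sub_pow_eq_sum {R : Type*} [CommRing R] (x : R) (N : ℕ) :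
    (1 - x) ^ N = ∑ k ∈ range (N + 1), (-1) ^ k * (N.choose k : R) * x ^ k := by
  rw [sub_eq_neg_add, add_pow]
  refine sum_congr rfl fun k _ ↦ ?_
  rw [one_pow, mul_one, neg_pow]
  ring

namespace FiniteField

variable {F : Type*} [Field F] [Fintype F]

local notation "q" => Fintype.card F

theorem sum_pow_of_ne_zero {m : ℕ} (hm : m ≠ 0) :
    ∑ x : F, x ^ m = if q - 1 ∣ m then -1 else 0 := by
  classical
  rw [← sum_pow_units F m, ← Fintype.sum_subtype_add_sum_subtype (· ≠ (0 : F)),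
    Fintype.sum_eq_zero (fun x : {x : F // ¬x ≠ 0} ↦ x.1 ^ m)
      fun x ↦ by simp [of_not_not x.2, zero_pow hm], add_zero]
  exact (Fintype.sum_equiv unitsEquivNeZero _ _ fun _ ↦ rfl).symm

theorem inv_pow_eq_pow {z : F} (hz : z ≠ 0) {u a : ℕ} (h : u + a = q - 1) :
    z⁻¹ ^ u = z ^ a := by
  rw [← mul_one (z⁻¹ ^ u), ← pow_card_sub_one_eq_one z hz, ← h, pow_add, ← mul_assoc,
    ← mul_pow, inv_mul_cancel₀ hz, one_pow, one_mul]

theorem sum_pow_mul_one_sub_pow {m j N : ℕ} (hm : m ≠ 0) (hmj : m + j = q - 1)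
    (hN : m + N < 2 * (q - 1)) :
    ∑ x : F, x ^ m * (1 - x) ^ N = -((-1) ^ j * N.choose j) := by
  have hdvd {k : ℕ} (hk : k ≤ N) : q - 1 ∣ m + k ↔ k = j := by
    refine ⟨fun ⟨c, hc⟩ ↦ ?_, fun hk ↦ ⟨1, by omega⟩⟩
    obtain rfl : c = 1 := by
      rcases c with _ | _ | c
      · omega
      · rfl
      · nlinarith
    omega
  calc ∑ x : F, x ^ m * (1 - x) ^ N
      = ∑ k ∈ range (N + 1), (-1) ^ k * (N.choose k : F) * ∑ x : F, x ^ (m + k) := by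
        simp_rw [one_sub_pow_eq_sum, mul_sum, pow_add]
        rw [sum_comm]
        exact sum_congr rfl fun k _ ↦ sum_congr rfl fun x _ ↦ by ring
    _ = ∑ k ∈ range (N + 1), if k = j then -((-1) ^ k * (N.choose k : F)) else 0 := by
        refine sum_congr rfl fun k hk ↦ ?_
        rw [sum_pow_of_ne_zero (by omega)]
        simp only [hdvd (Nat.lt_succ_iff.mp (mem_range.mp hk))]
        split_ifs <;> simp
    _ = -((-1) ^ j * N.choose j) := by
        rw [sum_ite_eq']
        split_ifs with hj
        · rfl
        · rw [Nat.choose_eq_zero_of_lt (by simpa [Nat.lt_succ_iff] using hj)]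
          simp

theorem sum_pow_mul_one_sub_pow_eq_neg_one_pow_mul_sum {u v a b : ℕ} (hu : u ≠ 0)
    (hab : a + b ≠ 0) (hua : u + a = q - 1) (hvb : v + b = q - 1) :
    ∑ x : F, x ^ u * (1 - x) ^ v = (-1) ^ v * ∑ y : F, y ^ v * (1 - y) ^ (a + b) := by
  -- since `0⁻¹ = 0`, this map swaps `0` and `1`
  have hbij : Function.Bijective fun y : F ↦ (1 - y)⁻¹ :=
    Function.bijective_iff_has_inverse.mpr ⟨fun x ↦ 1 - x⁻¹, fun y ↦ by simp, fun x ↦ by simp⟩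
  rw [← Fintype.sum_bijective _ hbij (fun y ↦ (-1) ^ v * (y ^ v * (1 - y) ^ (a + b))) _
    fun y ↦ ?_, mul_sum]
  rcases eq_or_ne y 1 with rfl | hy
  · simp [zero_pow hu, zero_pow hab]
  have hz : 1 - y ≠ 0 := sub_ne_zero.mpr hy.symm
  have hsub : 1 - (1 - y)⁻¹ = -y * (1 - y)⁻¹ := by field_simp; ring
  rw [hsub, mul_pow, inv_pow_eq_pow hz hua, inv_pow_eq_pow hz hvb, neg_pow, pow_add]
  ring

theorem sum_pow_mul_one_sub_pow_eq_neg_choose {a b : ℕ} (ha : 1 ≤ a) (ha' : a ≤ q - 2)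
    (hb : 1 ≤ b) (hb' : b ≤ q - 2) :
    ∑ x : F, x ^ (q - 1 - a) * (1 - x) ^ (q - 1 - b) = -((a + b).choose a : F) := by
  rw [sum_pow_mul_one_sub_pow_eq_neg_one_pow_mul_sum (F := F) (a := a) (b := b) (by omega)
      (by omega) (by omega) (by omega),
    sum_pow_mul_one_sub_pow (F := F) (j := b) (by omega) (by omega) (by omega),
    mul_neg, ← mul_assoc, ← pow_add, Nat.sub_add_cancel (show b ≤ q - 1 by omega),
    pow_card_sub_one_eq_one _ (neg_ne_zero.mpr one_ne_zero), one_mul, ← Nat.choose_symm_add]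

theorem sum_pow_mul_one_sub_pow_eq_zero {a b : ℕ} (ha : a ≤ q - 2) (hb : b ≤ q - 2)
    (hab : q ≤ a + b) :
    ∑ x : F, x ^ (q - 1 - a) * (1 - x) ^ (q - 1 - b) = 0 := by
  have hq : 0 < q := Fintype.card_pos
  rw [sum_pow_mul_one_sub_pow (F := F) (j := a) (by omega) (by omega) (by omega),
    Nat.choose_eq_zero_of_lt (show q - 1 - b < a by omega), Nat.cast_zero, mul_zero, neg_zero]

end FiniteField

theorem map_jacobiSum_pow_pow {F R : Type*} [CommRing F] [Fintype F] [CommRing R]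
    (π : R →+* F) (χ : MulChar F R) (hχ : ∀ x, π (χ x) = x) {u v : ℕ} (hu : u ≠ 0)
    (hv : v ≠ 0) :
    π (jacobiSum (χ ^ u) (χ ^ v)) = ∑ x : F, x ^ u * (1 - x) ^ v := by
  simp only [jacobiSum, map_sum, map_mul, χ.pow_apply' hu, χ.pow_apply' hv, map_pow, hχ]

theorem jacobiSum_teichmuller_congruence_general (q : ℕ)
    (K : Type*) [Field K]
    (𝔭 : Ideal (NumberField.RingOfIntegers K)) [𝔭.IsPrime]
    [Fintype (NumberField.RingOfIntegers K ⧸ 𝔭)]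
    (hcard : Fintype.card (NumberField.RingOfIntegers K ⧸ 𝔭) = q)
    (χ : MulChar (NumberField.RingOfIntegers K ⧸ 𝔭) (NumberField.RingOfIntegers K))
    (hχ : ∀ x : NumberField.RingOfIntegers K ⧸ 𝔭, Ideal.Quotient.mk 𝔭 (χ x) = x)
    (a b : ℕ) (ha1 : 1 ≤ a) (ha2 : a ≤ q - 2) (hb1 : 1 ≤ b) (hb2 : b ≤ q - 2) :
    Ideal.Quotient.mk 𝔭 (jacobiSum (χ ^ (q - 1 - a)) (χ ^ (q - 1 - b)))
        = -(((a + b).choose a : ℕ) : NumberField.RingOfIntegers K ⧸ 𝔭)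
      ∧ (q ≤ a + b →
          Ideal.Quotient.mk 𝔭 (jacobiSum (χ ^ (q - 1 - a)) (χ ^ (q - 1 - b))) = 0) := by
  have : 𝔭.IsMaximal := Ideal.Quotient.maximal_of_isField 𝔭 (Finite.isField_of_domain _)
  let _ : Field (NumberField.RingOfIntegers K ⧸ 𝔭) := Ideal.Quotient.field 𝔭
  subst hcard
  rw [map_jacobiSum_pow_pow _ χ hχ (by omega) (by omega)]
  exact ⟨FiniteField.sum_pow_mul_one_sub_pow_eq_neg_choose ha1 ha2 hb1 hb2,
    FiniteField.sum_pow_mul_one_sub_pow_eq_zero ha2 hb2⟩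

/-- Let `q = p^n` be an odd prime power, `K = ℚ(ζ_{q-1}, ζ_p)` (formalized as
a number field containing primitive `(q-1)`-th and `p`-th roots of unity), `𝔭` a prime ideal
of `𝒪_K` above `p` with `𝒪_K/𝔭 ≅ F_q`, and `χ_𝔭` the Teichmüller character of `𝔭`
(so `χ_𝔭(x) ≡ x (mod 𝔭)`; it generates the character group, and `χ_𝔭^{-a} = χ_𝔭^{q-1-a}`).
For `1 ≤ a, b ≤ q-2`: `J_q(χ_𝔭^{-a}, χ_𝔭^{-b}) ≡ -binom(a+b, a) (mod 𝔭)`, and in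
particular if `a + b ≥ q` then `J_q(χ_𝔭^{-a}, χ_𝔭^{-b}) ≡ 0 (mod 𝔭)`. -/
theorem jacobiSum_teichmuller_congruence (p n q : ℕ) [Fact p.Prime] (hp : Odd p)
    (hn : 0 < n) (hq : q = p ^ n)
    (K : Type*) [Field K] [NumberField K]
    (hζq : ∃ z : K, IsPrimitiveRoot z (q - 1)) (hζp : ∃ z : K, IsPrimitiveRoot z p)
    (𝔭 : Ideal (NumberField.RingOfIntegers K)) [𝔭.IsPrime]
    (hp𝔭 : (p : NumberField.RingOfIntegers K) ∈ 𝔭)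
    [Fintype (NumberField.RingOfIntegers K ⧸ 𝔭)]
    (hcard : Fintype.card (NumberField.RingOfIntegers K ⧸ 𝔭) = q)
    (χ : MulChar (NumberField.RingOfIntegers K ⧸ 𝔭) (NumberField.RingOfIntegers K))
    (hχ : ∀ x : NumberField.RingOfIntegers K ⧸ 𝔭, Ideal.Quotient.mk 𝔭 (χ x) = x)
    (a b : ℕ) (ha1 : 1 ≤ a) (ha2 : a ≤ q - 2) (hb1 : 1 ≤ b) (hb2 : b ≤ q - 2) :
    Ideal.Quotient.mk 𝔭 (jacobiSum (χ ^ (q - 1 - a)) (χ ^ (q - 1 - b)))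
        = -(((a + b).choose a : ℕ) : NumberField.RingOfIntegers K ⧸ 𝔭)
      ∧ (q ≤ a + b →
          Ideal.Quotient.mk 𝔭 (jacobiSum (χ ^ (q - 1 - a)) (χ ^ (q - 1 - b))) = 0) :=
  jacobiSum_teichmuller_congruence_general q K 𝔭 hcard χ hχ a b ha1 ha2 hb1 hb2
end
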